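/- arXiv:1608.03696 — 12 statements merged into one kernel-verified Lean document; each statement's English description precedes it below -/
import Mathlib

section
/- Let s > 0. For every z ∈ ℝ^n and every u ∈ (0,∞)^n, zᵀ H(u) A(u) z ≥ s Σ_{i=1}^n π_i a_{i0} u_i^{s-2} z_i² + s(1−s) Σ_{i,j=1, i≠j}^n π_i a_{ij} u_j^s u_i^{s-2} z_i² + s Σ_{i=1}^n ( (s+1) π_i a_{ii} − (s/2) Σ_{j=1}^n (√(π_i a_{ij}) − √(π_j a_{ji}))² ) u_i^{2(s-1)} z_i². -/
open Finset Real

noncomputable section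

/-- The diffusion matrix `A(u)`: `A_{ij}(u) = δ_{ij}(a_{i0} + Σ_k a_{ik} u_k^s) + s a_{ij} u_i u_j^{s-1}`. -/
def matA (n : ℕ) (s : ℝ) (a0 : Fin n → ℝ) (a : Fin n → Fin n → ℝ) (u : Fin n → ℝ) :
    Matrix (Fin n) (Fin n) ℝ :=
  Matrix.of fun i j =>
    (if i = j then a0 i + ∑ k, a i k * u k ^ s else 0) + s * a i j * u i * u j ^ (s - 1)

/-- The entropy Hessian `H(u)`: `H_{ij}(u) = δ_{ij} s π_i u_i^{s-2}`. -/
def matH (n : ℕ) (s : ℝ) (P : Fin n → ℝ) (u : Fin n → ℝ) : Matrix (Fin n) (Fin n) ℝ :=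
  Matrix.of fun i j => if i = j then s * P i * u i ^ (s - 2) else 0

/-- The quadratic form `zᵀ M z`. -/
def quad (n : ℕ) (M : Matrix (Fin n) (Fin n) ℝ) (z : Fin n → ℝ) : ℝ :=
  ∑ i, ∑ j, z i * M i j * z j

/-- Auxiliary: an elementary sum-of-squares inequality used for each symmetric pair. -/
lemma pairkey (b c t t' A B : ℝ) (hb : 0 ≤ b) (hc : 0 ≤ c) (ht : 0 < t) (htt' : t * t' = 1) :
    0 ≤ b * t * A ^ 2 + (b + c) * (A * B) + c * t' * B ^ 2
      + 1 / 2 * (Real.sqrt b - Real.sqrt c) ^ 2 * (A ^ 2 + B ^ 2) := by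
  have hb2 : Real.sqrt b ^ 2 = b := Real.sq_sqrt hb
  have hc2 : Real.sqrt c ^ 2 = c := Real.sq_sqrt hc
  have key : t * (b * t * A ^ 2 + (b + c) * (A * B) + c * t' * B ^ 2
      + 1 / 2 * (Real.sqrt b - Real.sqrt c) ^ 2 * (A ^ 2 + B ^ 2))
      = (Real.sqrt b * t * A + Real.sqrt c * B) ^ 2
        + t / 2 * ((Real.sqrt b - Real.sqrt c) * (A + B)) ^ 2 := by
    linear_combination (-(t^2*A^2 + t*A*B)) * hb2 + (-(t*A*B + B^2)) * hc2 + (c*B^2) * htt'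
  have h : 0 ≤ t * (b * t * A ^ 2 + (b + c) * (A * B) + c * t' * B ^ 2
      + 1 / 2 * (Real.sqrt b - Real.sqrt c) ^ 2 * (A ^ 2 + B ^ 2)) := by
    rw [key]; positivity
  exact nonneg_of_mul_nonneg_right h ht

/-- Auxiliary: the off-diagonal remainder term. -/
def fpair (n : ℕ) (s : ℝ) (a : Fin n → Fin n → ℝ) (P z u : Fin n → ℝ) (i j : Fin n) : ℝ :=
  P i * a i j * u j ^ s * u i ^ (s - 2) * z i ^ 2
    + P i * a i j * (u i ^ (s - 2) * u i * z i) * (u j ^ (s - 1) * z j)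
    + 1 / 2 * (Real.sqrt (P i * a i j) - Real.sqrt (P j * a j i)) ^ 2
        * (u i ^ (s - 2) * u i * z i) ^ 2

theorem stmt0 (n : ℕ) (hn : 1 ≤ n) (s : ℝ) (hs : 0 < s)
    (a0 : Fin n → ℝ) (a : Fin n → Fin n → ℝ) (P : Fin n → ℝ)
    (ha0 : ∀ i, 0 ≤ a0 i) (ha : ∀ i j, 0 ≤ a i j) (hP : ∀ i, 0 < P i)
    (z u : Fin n → ℝ) (hu : ∀ i, 0 < u i) :
    s * ∑ i, P i * a0 i * u i ^ (s - 2) * z i ^ 2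
      + s * (1 - s) * ∑ i, ∑ j ∈ Finset.univ.erase i,
          P i * a i j * u j ^ s * u i ^ (s - 2) * z i ^ 2
      + s * ∑ i, ((s + 1) * P i * a i i
          - s / 2 * ∑ j, (Real.sqrt (P i * a i j) - Real.sqrt (P j * a j i)) ^ 2)
          * u i ^ (2 * (s - 1)) * z i ^ 2
    ≤ quad n (matH n s P u * matA n s a0 a u) z := by
  -- basic power identities
  have hA : ∀ i, u i ^ (s - 1) = u i ^ (s - 2) * u i := by
    intro i
    rw [show s - 1 = s - 2 + 1 by ring, Real.rpow_add (hu i), Real.rpow_one]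
  have hB : ∀ i, u i ^ s = u i ^ (s - 2) * (u i * u i) := by
    intro i
    have h1 : u i ^ s = u i ^ (s - 2) * u i ^ (2 : ℝ) := by
      rw [← Real.rpow_add (hu i)]; ring_nf
    rw [h1, show (2 : ℝ) = ((2 : ℕ) : ℝ) by norm_num, Real.rpow_natCast]; ring
  have hC : ∀ i, u i ^ (2 * (s - 1)) = u i ^ (s - 2) * u i ^ (s - 2) * (u i * u i) := by
    intro i
    rw [show 2 * (s - 1) = (s - 2) + s by ring, Real.rpow_add (hu i), hB i]; ring
  -- expansion of the quadratic form
  have quad_eq : quad n (matH n s P u * matA n s a0 a u) z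
      = (∑ i, s * P i * u i ^ (s - 2) * (a0 i + ∑ k, a i k * u k ^ s) * z i ^ 2)
        + ∑ i, ∑ j, s ^ 2 * P i * a i j * u i ^ (s - 2) * u i * u j ^ (s - 1) * z i * z j := by
    unfold quad matH matA
    simp only [Matrix.mul_apply, Matrix.of_apply, ite_mul, zero_mul, Finset.sum_ite_eq,
      Finset.mem_univ, if_true]
    rw [← Finset.sum_add_distrib]
    refine Finset.sum_congr rfl fun i _ => ?_
    have hj : ∀ j, z i * (s * P i * u i ^ (s - 2) * ((if i = j then a0 i + ∑ k, a i k * u k ^ s else 0)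
        + s * a i j * u i * u j ^ (s - 1))) * z j
        = (if i = j then s * P i * u i ^ (s - 2) * (a0 i + ∑ k, a i k * u k ^ s) * z i * z j else 0)
          + s ^ 2 * P i * a i j * u i ^ (s - 2) * u i * u j ^ (s - 1) * z i * z j := by
      intro j; split <;> ring
    rw [Finset.sum_congr rfl fun j _ => hj j, Finset.sum_add_distrib, Finset.sum_ite_eq,
      if_pos (Finset.mem_univ i)]
    ring
  -- nonnegativity of each symmetric pair
  have hpair : ∀ i j, 0 ≤ fpair n s a P z u i j + fpair n s a P z u j i := by
    intro i j
    have hb : 0 ≤ P i * a i j := mul_nonneg (hP i).le (ha i j)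
    have hc : 0 ≤ P j * a j i := mul_nonneg (hP j).le (ha j i)
    have hqi : (0:ℝ) < u i ^ (s - 2) := Real.rpow_pos_of_pos (hu i) _
    have hqj : (0:ℝ) < u j ^ (s - 2) := Real.rpow_pos_of_pos (hu j) _
    have hui := hu i
    have huj := hu j
    have key := pairkey (P i * a i j) (P j * a j i)
      ((u j ^ (s - 2) * (u j * u j)) / (u i ^ (s - 2) * (u i * u i)))
      ((u i ^ (s - 2) * (u i * u i)) / (u j ^ (s - 2) * (u j * u j)))
      (u i ^ (s - 2) * u i * z i) (u j ^ (s - 2) * u j * z j)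
      hb hc (by positivity) (by field_simp)
    have e : fpair n s a P z u i j + fpair n s a P z u j i
        = (P i * a i j) * ((u j ^ (s - 2) * (u j * u j)) / (u i ^ (s - 2) * (u i * u i)))
            * (u i ^ (s - 2) * u i * z i) ^ 2
          + ((P i * a i j) + (P j * a j i))
            * ((u i ^ (s - 2) * u i * z i) * (u j ^ (s - 2) * u j * z j))
          + (P j * a j i) * ((u i ^ (s - 2) * (u i * u i)) / (u j ^ (s - 2) * (u j * u j)))
            * (u j ^ (s - 2) * u j * z j) ^ 2
          + 1 / 2 * (Real.sqrt (P i * a i j) - Real.sqrt (P j * a j i)) ^ 2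
            * ((u i ^ (s - 2) * u i * z i) ^ 2 + (u j ^ (s - 2) * u j * z j) ^ 2) := by
      simp only [fpair]
      rw [hA i, hA j, hB i, hB j]
      field_simp
      ring
    rw [e]; exact key
  -- nonnegativity of the remainder sum
  have hnn : 0 ≤ ∑ i, ∑ j ∈ Finset.univ.erase i, fpair n s a P z u i j := by
    have hsym : (∑ i, ∑ j ∈ Finset.univ.erase i, fpair n s a P z u i j)
        = ∑ i, ∑ j ∈ Finset.univ.erase i, fpair n s a P z u j i := by
      exact Finset.sum_comm' (fun x y => by
        simp only [Finset.mem_univ, true_and, and_true, Finset.mem_erase]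
        exact ne_comm)
    have hsum : 0 ≤ ∑ i, ∑ j ∈ Finset.univ.erase i,
        (fpair n s a P z u i j + fpair n s a P z u j i) :=
      Finset.sum_nonneg fun i _ => Finset.sum_nonneg fun j _ => hpair i j
    simp only [Finset.sum_add_distrib] at hsum
    linarith [hsym ▸ hsum]
  -- the main algebraic identity
  have IDE : (∑ i, s * P i * u i ^ (s - 2) * (a0 i + ∑ k, a i k * u k ^ s) * z i ^ 2)
        + (∑ i, ∑ j, s ^ 2 * P i * a i j * u i ^ (s - 2) * u i * u j ^ (s - 1) * z i * z j)
      = (s * ∑ i, P i * a0 i * u i ^ (s - 2) * z i ^ 2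
          + s * (1 - s) * ∑ i, ∑ j ∈ Finset.univ.erase i,
              P i * a i j * u j ^ s * u i ^ (s - 2) * z i ^ 2
          + s * ∑ i, ((s + 1) * P i * a i i
              - s / 2 * ∑ j, (Real.sqrt (P i * a i j) - Real.sqrt (P j * a j i)) ^ 2)
              * u i ^ (2 * (s - 1)) * z i ^ 2)
        + s ^ 2 * ∑ i, ∑ j ∈ Finset.univ.erase i, fpair n s a P z u i j := by
    rw [← Finset.sum_add_distrib]
    rw [show (s * ∑ i, P i * a0 i * u i ^ (s - 2) * z i ^ 2
          + s * (1 - s) * ∑ i, ∑ j ∈ Finset.univ.erase i,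
              P i * a i j * u j ^ s * u i ^ (s - 2) * z i ^ 2
          + s * ∑ i, ((s + 1) * P i * a i i
              - s / 2 * ∑ j, (Real.sqrt (P i * a i j) - Real.sqrt (P j * a j i)) ^ 2)
              * u i ^ (2 * (s - 1)) * z i ^ 2)
        + s ^ 2 * ∑ i, ∑ j ∈ Finset.univ.erase i, fpair n s a P z u i j
      = ∑ i, (s * (P i * a0 i * u i ^ (s - 2) * z i ^ 2)
          + s * (1 - s) * ∑ j ∈ Finset.univ.erase i,
              P i * a i j * u j ^ s * u i ^ (s - 2) * z i ^ 2
          + s * (((s + 1) * P i * a i i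
              - s / 2 * ∑ j, (Real.sqrt (P i * a i j) - Real.sqrt (P j * a j i)) ^ 2)
              * u i ^ (2 * (s - 1)) * z i ^ 2)
          + s ^ 2 * ∑ j ∈ Finset.univ.erase i, fpair n s a P z u i j) from by
        simp only [Finset.sum_add_distrib, Finset.mul_sum]]
    refine Finset.sum_congr rfl fun i _ => ?_
    have E1 : (∑ k, a i k * u k ^ s)
        = a i i * u i ^ s + ∑ k ∈ Finset.univ.erase i, a i k * u k ^ s :=
      (Finset.add_sum_erase _ _ (Finset.mem_univ i)).symm
    have E2 : (∑ j, s ^ 2 * P i * a i j * u i ^ (s - 2) * u i * u j ^ (s - 1) * z i * z j)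
        = s ^ 2 * P i * a i i * u i ^ (s - 2) * u i * u i ^ (s - 1) * z i * z i
          + s ^ 2 * P i * u i ^ (s - 2) * u i * z i
            * ∑ j ∈ Finset.univ.erase i, a i j * (u j ^ (s - 1) * z j) := by
      rw [← Finset.add_sum_erase _ _ (Finset.mem_univ i), Finset.mul_sum]
      congr 1
      exact Finset.sum_congr rfl fun j _ => by ring
    have E3 : (∑ j, (Real.sqrt (P i * a i j) - Real.sqrt (P j * a j i)) ^ 2)
        = ∑ j ∈ Finset.univ.erase i, (Real.sqrt (P i * a i j) - Real.sqrt (P j * a j i)) ^ 2 := by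
      rw [← Finset.add_sum_erase _ _ (Finset.mem_univ i), sub_self, zero_pow (by norm_num),
        zero_add]
    have E4 : (∑ j ∈ Finset.univ.erase i, P i * a i j * u j ^ s * u i ^ (s - 2) * z i ^ 2)
        = P i * u i ^ (s - 2) * z i ^ 2 * ∑ j ∈ Finset.univ.erase i, a i j * u j ^ s := by
      rw [Finset.mul_sum]
      exact Finset.sum_congr rfl fun j _ => by ring
    have E5 : (∑ j ∈ Finset.univ.erase i, fpair n s a P z u i j)
        = P i * u i ^ (s - 2) * z i ^ 2 * (∑ j ∈ Finset.univ.erase i, a i j * u j ^ s)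
          + P i * (u i ^ (s - 2) * u i * z i)
            * (∑ j ∈ Finset.univ.erase i, a i j * (u j ^ (s - 1) * z j))
          + 1 / 2 * (u i ^ (s - 2) * u i * z i) ^ 2
            * (∑ j ∈ Finset.univ.erase i,
                (Real.sqrt (P i * a i j) - Real.sqrt (P j * a j i)) ^ 2) := by
      rw [Finset.mul_sum, Finset.mul_sum, Finset.mul_sum, ← Finset.sum_add_distrib,
        ← Finset.sum_add_distrib]
      exact Finset.sum_congr rfl fun j _ => by simp only [fpair]; ring
    rw [E1, E2, E3, E4, E5, hA i, hB i, hC i]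
    ring
  rw [quad_eq, IDE]
  nlinarith [hnn, sq_nonneg s]
end
end

section
/- Let s > 0. For every z ∈ ℝ^n and every u ∈ (0,∞)^n, the quantity J := s² Σ_{i,j=1, i≠j}^n π_i a_{ij} u_j^s u_i^{s-2} z_i² + s² Σ_{i,j=1, i≠j}^n π_i a_{ij} (u_i u_j)^{s-1} z_i z_j satisfies J ≥ −(s²/2) Σ_{i,j=1, i≠j}^n (√(π_i a_{ij}) − √(π_j a_{ji}))² u_i^{2(s-1)} z_i². -/
open Finset Real

noncomputable section

/-
For each unordered pair `i ≠ j` put `p = √(π_i a_ij)`, `q = √(π_j a_ji)`, `x = u_i^(s-1) z_i`,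
`y = u_j^(s-1) z_j` and `t = u_j^s / u_i^s`. The `(i, j)` and `(j, i)` terms of `J` plus the
corresponding terms of the bound combine to
`p² t x² + q² t⁻¹ y² + (p² + q²) x y + ½ (p - q)² (x² + y²)`.
This equals `(p t x + q y)² / t + ½ (p - q)² (x + y)²`, so each pair contributes a nonnegative amount.
-/

theorem Finset.sum_sum_erase_comm {ι M : Type*} [Fintype ι] [DecidableEq ι] [AddCommMonoid M]
    (f : ι → ι → M) :
    ∑ i, ∑ j ∈ univ.erase i, f i j = ∑ i, ∑ j ∈ univ.erase i, f j i :=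
  Finset.sum_comm' fun i j => by simp [eq_comm]

theorem Finset.sum_sum_erase_nonneg_of_add_swap_nonneg {ι M : Type*} [Fintype ι] [DecidableEq ι]
    [AddCommMonoid M] [LinearOrder M] [IsOrderedAddMonoid M] {f : ι → ι → M}
    (hf : ∀ i j, i ≠ j → 0 ≤ f i j + f j i) :
    0 ≤ ∑ i, ∑ j ∈ univ.erase i, f i j := by
  have hsym : 2 • ∑ i, ∑ j ∈ univ.erase i, f i j = ∑ i, ∑ j ∈ univ.erase i, (f i j + f j i) := by
    rw [two_nsmul]
    nth_rewrite 2 [Finset.sum_sum_erase_comm]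
    simp only [← Finset.sum_add_distrib]
  rw [← nsmul_nonneg_iff two_ne_zero, hsym]
  exact Finset.sum_nonneg fun i _ => Finset.sum_nonneg fun j hj =>
    hf i j (Finset.ne_of_mem_erase hj).symm

theorem pair_form_nonneg {p q t x y : ℝ} (ht : 0 < t) :
    0 ≤ p ^ 2 * t * x ^ 2 + q ^ 2 * t⁻¹ * y ^ 2 + (p ^ 2 + q ^ 2) * x * y
      + 1 / 2 * (p - q) ^ 2 * (x ^ 2 + y ^ 2) := by
  have sum_of_squares : p ^ 2 * t * x ^ 2 + q ^ 2 * t⁻¹ * y ^ 2 + (p ^ 2 + q ^ 2) * x * y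
      + 1 / 2 * (p - q) ^ 2 * (x ^ 2 + y ^ 2)
      = (p * t * x + q * y) ^ 2 / t + 1 / 2 * (p - q) ^ 2 * (x + y) ^ 2 := by
    field_simp
    ring
  rw [sum_of_squares]
  positivity

theorem rpow_two_mul_sub_one {u : ℝ} (hu : 0 < u) (s : ℝ) :
    u ^ (2 * (s - 1)) = (u ^ (s - 1)) ^ 2 := by
  rw [mul_comm, Real.rpow_mul hu.le, Real.rpow_two]

theorem rpow_sub_two_eq_sq_div {u : ℝ} (hu : 0 < u) (s : ℝ) :
    u ^ (s - 2) = (u ^ (s - 1)) ^ 2 / u ^ s := by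
  rw [← rpow_two_mul_sub_one hu, eq_div_iff (Real.rpow_pos_of_pos hu s).ne', ← Real.rpow_add hu]
  ring_nf

theorem pair_terms_nonneg {α β ui uj zi zj s : ℝ} (hα : 0 ≤ α) (hβ : 0 ≤ β)
    (hui : 0 < ui) (huj : 0 < uj) :
    0 ≤ (α * uj ^ s * ui ^ (s - 2) * zi ^ 2 + α * (ui * uj) ^ (s - 1) * zi * zj
          + 1 / 2 * ((√α - √β) ^ 2 * ui ^ (2 * (s - 1)) * zi ^ 2))
      + (β * ui ^ s * uj ^ (s - 2) * zj ^ 2 + β * (uj * ui) ^ (s - 1) * zj * zi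
          + 1 / 2 * ((√β - √α) ^ 2 * uj ^ (2 * (s - 1)) * zj ^ 2)) := by
  have hsi : 0 < ui ^ s := Real.rpow_pos_of_pos hui s
  have hsj : 0 < uj ^ s := Real.rpow_pos_of_pos huj s
  have key := pair_form_nonneg (p := √α) (q := √β) (x := ui ^ (s - 1) * zi)
    (y := uj ^ (s - 1) * zj) (div_pos hsj hsi)
  rw [Real.sq_sqrt hα, Real.sq_sqrt hβ, inv_div] at key
  rw [rpow_sub_two_eq_sq_div hui, rpow_sub_two_eq_sq_div huj, rpow_two_mul_sub_one hui,
    rpow_two_mul_sub_one huj, Real.mul_rpow hui.le huj.le, Real.mul_rpow huj.le hui.le]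
  convert key using 1
  field_simp
  ring

theorem stmt1_general (n : ℕ) (s : ℝ)
    (a : Fin n → Fin n → ℝ) (P : Fin n → ℝ)
    (ha : ∀ i j, 0 ≤ a i j) (hP : ∀ i, 0 < P i)
    (z u : Fin n → ℝ) (hu : ∀ i, 0 < u i) :
    -(s ^ 2 / 2) * ∑ i, ∑ j ∈ Finset.univ.erase i,
        (Real.sqrt (P i * a i j) - Real.sqrt (P j * a j i)) ^ 2
          * u i ^ (2 * (s - 1)) * z i ^ 2
    ≤ s ^ 2 * (∑ i, ∑ j ∈ Finset.univ.erase i,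
          P i * a i j * u j ^ s * u i ^ (s - 2) * z i ^ 2)
      + s ^ 2 * ∑ i, ∑ j ∈ Finset.univ.erase i,
          P i * a i j * (u i * u j) ^ (s - 1) * z i * z j := by
  have hPa : ∀ i j, 0 ≤ P i * a i j := fun i j => mul_nonneg (hP i).le (ha i j)
  have key : 0 ≤ ∑ i, ∑ j ∈ univ.erase i,
      (P i * a i j * u j ^ s * u i ^ (s - 2) * z i ^ 2
        + P i * a i j * (u i * u j) ^ (s - 1) * z i * z j
        + 1 / 2 * ((√(P i * a i j) - √(P j * a j i)) ^ 2 * u i ^ (2 * (s - 1)) * z i ^ 2)) :=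
    sum_sum_erase_nonneg_of_add_swap_nonneg fun i j _ =>
      pair_terms_nonneg (hPa i j) (hPa j i) (hu i) (hu j)
  simp only [sum_add_distrib, ← mul_sum] at key
  nlinarith [mul_nonneg (sq_nonneg s) key]

theorem stmt1 (n : ℕ) (hn : 1 ≤ n) (s : ℝ) (hs : 0 < s)
    (a : Fin n → Fin n → ℝ) (P : Fin n → ℝ)
    (ha : ∀ i j, 0 ≤ a i j) (hP : ∀ i, 0 < P i)
    (z u : Fin n → ℝ) (hu : ∀ i, 0 < u i) :
    -(s ^ 2 / 2) * ∑ i, ∑ j ∈ Finset.univ.erase i,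
        (Real.sqrt (P i * a i j) - Real.sqrt (P j * a j i)) ^ 2
          * u i ^ (2 * (s - 1)) * z i ^ 2
    ≤ s ^ 2 * (∑ i, ∑ j ∈ Finset.univ.erase i,
          P i * a i j * u j ^ s * u i ^ (s - 2) * z i ^ 2)
      + s ^ 2 * ∑ i, ∑ j ∈ Finset.univ.erase i,
          P i * a i j * (u i * u j) ^ (s - 1) * z i * z j :=
  stmt1_general n s a P ha hP z u hu
end
end

section
/- Let 0 < s ≤ 1 and take π_i = 1 for all i. If η₀ := min_{i=1,…,n} ( a_{ii} − (s/(2(s+1))) Σ_{j=1}^n (√(a_{ij}) − √(a_{ji}))² ) > 0, then for every z ∈ ℝ^n and every u ∈ (0,∞)^n, zᵀ H(u) A(u) z ≥ s Σ_{i=1}^n a_{i0} u_i^{s-2} z_i² + η₀ s(s+1) Σ_{i=1}^n u_i^{2(s-1)} z_i². -/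
open Finset Real

noncomputable section

lemma keyaux (s A B p q x y : ℝ) (hs : 0 < s) (hs1 : s ≤ 1)
    (hA : 0 ≤ A) (hB : 0 ≤ B) (hp : 0 < p) (hq : 0 < q) :
    0 ≤ A^2 * q^2 * x^2 + B^2 * p^2 * y^2 + s * (A^2 + B^2) * (p*q) * (x*y)
      + s/2 * (A - B)^2 * ((p*q) * (x^2 + y^2)) := by
  rcases le_or_gt 0 (x*y) with h | h
  · have h1 : 0 ≤ p*q*(x*y)*(s*(A^2+B^2)+2*A*B) := by
      apply mul_nonneg (mul_nonneg (mul_pos hp hq).le h)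
      positivity
    nlinarith [sq_nonneg (A*q*x - B*p*y),
      mul_nonneg (mul_nonneg hs.le (sq_nonneg (A-B))) (mul_nonneg (mul_pos hp hq).le (by positivity : (0:ℝ) ≤ x^2+y^2))]
  · have h1 : 0 ≤ A*B*(p*q)*(-(x*y))*(1-s) := by
      apply mul_nonneg (mul_nonneg (mul_nonneg (mul_nonneg hA hB) (mul_pos hp hq).le) (by linarith)) (by linarith)
    nlinarith [sq_nonneg (A*q*x + B*p*y),
      mul_nonneg (mul_nonneg hs.le (sq_nonneg (A-B))) (mul_nonneg (mul_pos hp hq).le (sq_nonneg (x+y)))]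

lemma key (s α β p q x y : ℝ) (hs : 0 < s) (hs1 : s ≤ 1)
    (hα : 0 ≤ α) (hβ : 0 ≤ β) (hp : 0 < p) (hq : 0 < q) :
    0 ≤ α * (q/p) * x^2 + β * (p/q) * y^2 + s * (α + β) * (x*y)
      + s/2 * (Real.sqrt α - Real.sqrt β)^2 * (x^2 + y^2) := by
  have h := keyaux s (Real.sqrt α) (Real.sqrt β) p q x y hs hs1
    (Real.sqrt_nonneg _) (Real.sqrt_nonneg _) hp hq
  rw [Real.sq_sqrt hα, Real.sq_sqrt hβ] at h
  have heq : α * (q/p) * x^2 + β * (p/q) * y^2 + s * (α + β) * (x*y)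
      + s/2 * (Real.sqrt α - Real.sqrt β)^2 * (x^2 + y^2)
      = (α * q^2 * x^2 + β * p^2 * y^2 + s * (α + β) * (p*q) * (x*y)
      + s/2 * (Real.sqrt α - Real.sqrt β)^2 * ((p*q) * (x^2 + y^2))) / (p*q) := by
    field_simp
  rw [heq]
  exact div_nonneg h (mul_pos hp hq).le

theorem stmt4 (n : ℕ) [NeZero n] (s : ℝ) (hs : 0 < s) (hs1 : s ≤ 1)
    (a0 : Fin n → ℝ) (a : Fin n → Fin n → ℝ)
    (ha0 : ∀ i, 0 ≤ a0 i) (ha : ∀ i j, 0 ≤ a i j)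
    (η0 : ℝ)
    (hη0 : η0 = Finset.univ.inf' Finset.univ_nonempty
      (fun i => a i i - s / (2 * (s + 1))
        * ∑ j, (Real.sqrt (a i j) - Real.sqrt (a j i)) ^ 2))
    (hpos : 0 < η0) :
    ∀ (z u : Fin n → ℝ), (∀ i, 0 < u i) →
      s * ∑ i, a0 i * u i ^ (s - 2) * z i ^ 2
        + η0 * (s * (s + 1)) * ∑ i, u i ^ (2 * (s - 1)) * z i ^ 2
      ≤ quad n (matH n s (fun _ => 1) u * matA n s a0 a u) z := by
  intro z u hu
  set x : Fin n → ℝ := fun i => u i ^ (s-1) * z i with hxdef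
  -- basic rpow facts
  have hq : ∀ i, (0:ℝ) < u i ^ s := fun i => Real.rpow_pos_of_pos (hu i) s
  have e1 : ∀ i, u i ^ (s-2) * u i ^ s = u i ^ (s-1) * u i ^ (s-1) := by
    intro i
    rw [← Real.rpow_add (hu i), ← Real.rpow_add (hu i)]
    ring_nf
  have e2 : ∀ i, u i ^ (s-2) * u i = u i ^ (s-1) := by
    intro i
    have h := Real.rpow_add (hu i) (s-2) 1
    rw [Real.rpow_one] at h
    rw [← h, show s-2+1 = s-1 by ring]
  have e3 : ∀ i, u i ^ (2*(s-1)) = u i ^ (s-1) * u i ^ (s-1) := by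
    intro i
    rw [← Real.rpow_add (hu i)]
    ring_nf
  -- the double sum
  set D : ℝ := ∑ i, ∑ j, a i j * (u j ^ s * u i ^ (s-2) * z i ^ 2 + s * (x i * x j)) with hD
  have hquad : quad n (matH n s (fun _ => 1) u * matA n s a0 a u) z
      = s * (∑ i, a0 i * u i ^ (s-2) * z i ^ 2) + s * D := by
    have hentry : ∀ i j, (matH n s (fun _ => 1) u * matA n s a0 a u) i j
        = s * u i ^ (s-2) * ((if i = j then a0 i + ∑ k, a i k * u k ^ s else 0)
            + s * a i j * u i * u j ^ (s-1)) := by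
      intro i j
      simp [Matrix.mul_apply, matH, matA, ite_mul, zero_mul, Finset.sum_ite_eq]
    unfold quad
    simp only [hentry]
    rw [hD, Finset.mul_sum, Finset.mul_sum, ← Finset.sum_add_distrib]
    refine Finset.sum_congr rfl fun i _ => ?_
    have split : ∀ j, z i * (s * u i ^ (s-2) * ((if i = j then a0 i + ∑ k, a i k * u k ^ s else 0)
          + s * a i j * u i * u j ^ (s-1))) * z j
        = (if i = j then z i * (s * u i ^ (s-2) * (a0 i + ∑ k, a i k * u k ^ s)) * z j else 0)
          + z i * (s * u i ^ (s-2) * (s * a i j * u i * u j ^ (s-1))) * z j := by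
      intro j
      by_cases h : i = j <;> simp [h] <;> ring
    simp only [split]
    rw [Finset.sum_add_distrib, Finset.sum_ite_eq, if_pos (Finset.mem_univ i)]
    have expand : z i * (s * u i ^ (s - 2) * (a0 i + ∑ k, a i k * u k ^ s)) * z i
        = s * (a0 i * u i ^ (s-2) * z i ^ 2) + ∑ k, z i * (s * u i ^ (s-2) * (a i k * u k ^ s)) * z i := by
      rw [mul_add, Finset.mul_sum, mul_add, add_mul, Finset.mul_sum, Finset.sum_mul]
      congr 1 <;> first
        | ring
        | exact Finset.sum_congr rfl fun k _ => by ring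
    rw [expand, add_assoc, ← Finset.sum_add_distrib, Finset.mul_sum]
    congr 1
    refine Finset.sum_congr rfl fun j _ => ?_
    simp only [hxdef]
    linear_combination (s^2 * a i j * u j ^ (s-1) * z i * z j) * e2 i
  have main : η0 * (s+1) * ∑ i, x i ^ 2 ≤ D := by
    set w : Fin n → Fin n → ℝ := fun i j => (Real.sqrt (a i j) - Real.sqrt (a j i))^2 with hw
    have hη : ∀ i, η0 ≤ a i i - s/(2*(s+1)) * ∑ j, w i j := by
      intro i; rw [hη0]; exact Finset.inf'_le _ (Finset.mem_univ i)
    have hs1' : (0:ℝ) < s + 1 := by linarith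
    have step1 : η0 * (s+1) * ∑ i, x i ^ 2
        ≤ ∑ i, ((s+1) * a i i * x i ^ 2 - ∑ j, (s/2) * w i j * x i ^ 2) := by
      rw [Finset.mul_sum]
      refine Finset.sum_le_sum fun i _ => ?_
      have h1 : η0 * (s+1) * x i ^ 2 ≤ (a i i - s/(2*(s+1)) * ∑ j, w i j) * (s+1) * x i ^ 2 :=
        mul_le_mul_of_nonneg_right (mul_le_mul_of_nonneg_right (hη i) hs1'.le) (sq_nonneg _)
      have h2 : ∑ j, (s/2) * w i j * x i ^ 2 = (s/2) * (∑ j, w i j) * x i ^ 2 := by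
        rw [← Finset.sum_mul, ← Finset.mul_sum]
      have h3 : (a i i - s/(2*(s+1)) * ∑ j, w i j) * (s+1) * x i ^ 2
          = (s+1) * a i i * x i ^ 2 - (s/2) * (∑ j, w i j) * x i ^ 2 := by
        field_simp
      rw [h2]
      linarith
    have step2 : ∑ i, ((s+1) * a i i * x i ^ 2 - ∑ j, (s/2) * w i j * x i ^ 2)
        = ∑ i, ∑ j, ((if i = j then (s+1) * a i i * x i ^ 2 else 0) - (s/2) * w i j * x i ^ 2) := by
      refine Finset.sum_congr rfl fun i _ => ?_
      rw [Finset.sum_sub_distrib, Finset.sum_ite_eq, if_pos (Finset.mem_univ i)]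
    set G : Fin n → Fin n → ℝ := fun i j =>
      a i j * (u j ^ s * u i ^ (s-2) * z i ^ 2 + s * (x i * x j)) + (s/2) * w i j * x i ^ 2
        - (if i = j then (s+1) * a i i * x i ^ 2 else 0) with hG
    have hpair : ∀ i j, 0 ≤ G i j + G j i := by
      intro i j
      by_cases h : i = j
      · subst h
        have hx2 : u i ^ s * u i ^ (s-2) * z i ^ 2 = x i ^ 2 := by
          simp only [hxdef]
          linear_combination (z i ^ 2) * e1 i
        have hzero : G i i + G i i = 0 := by
          simp only [hG, hw, if_true]
          rw [hx2]
          ring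
        rw [hzero]
      · have hxi : u j ^ s * u i ^ (s-2) * z i ^ 2 = (u j ^ s / u i ^ s) * x i ^ 2 := by
          simp only [hxdef]
          rw [div_mul_eq_mul_div, eq_div_iff (hq i).ne']
          linear_combination (u j ^ s * z i ^ 2) * e1 i
        have hxj : u i ^ s * u j ^ (s-2) * z j ^ 2 = (u i ^ s / u j ^ s) * x j ^ 2 := by
          simp only [hxdef]
          rw [div_mul_eq_mul_div, eq_div_iff (hq j).ne']
          linear_combination (u i ^ s * z j ^ 2) * e1 j
        simp only [hG, hw, if_neg h, if_neg (Ne.symm h)]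
        rw [hxi, hxj]
        have hk := key s (a i j) (a j i) (u i ^ s) (u j ^ s) (x i) (x j) hs hs1
          (ha i j) (ha j i) (hq i) (hq j)
        nlinarith [hk]
    have hGsum : 0 ≤ ∑ i, ∑ j, G i j := by
      have h2 : ∑ i, ∑ j, (G i j + G j i) = (2:ℝ) * ∑ i, ∑ j, G i j := by
        simp only [Finset.sum_add_distrib]
        rw [Finset.sum_comm (f := fun i j => G j i)]
        ring
      have h3 : 0 ≤ ∑ i, ∑ j, (G i j + G j i) :=
        Finset.sum_nonneg fun i _ => Finset.sum_nonneg fun j _ => hpair i j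
      linarith
    have hdiff : D - ∑ i, ∑ j, ((if i = j then (s+1) * a i i * x i ^ 2 else 0)
        - (s/2) * w i j * x i ^ 2) = ∑ i, ∑ j, G i j := by
      rw [hD, ← Finset.sum_sub_distrib]
      refine Finset.sum_congr rfl fun i _ => ?_
      rw [← Finset.sum_sub_distrib]
      refine Finset.sum_congr rfl fun j _ => ?_
      simp only [hG]
      ring
    linarith [step1, step2, hdiff, hGsum]
  have hxsum : ∑ i, u i ^ (2*(s-1)) * z i ^ 2 = ∑ i, x i ^ 2 := by
    refine Finset.sum_congr rfl fun i _ => ?_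
    rw [e3 i, hxdef]
    ring
  rw [hquad, hxsum]
  have : η0 * (s * (s + 1)) * ∑ i, x i ^ 2 = s * (η0 * (s+1) * ∑ i, x i ^ 2) := by ring
  rw [this]
  have := mul_le_mul_of_nonneg_left main hs.le
  linarith
end
end

section
/- Take π_i = 1 for all i and assume a_{ij} + a_{ji} > 0 for all i, j = 1, …, n. Set s₀ := min_{i,j=1,…,n} 2√(a_{ij} a_{ji}) / (a_{ij} + a_{ji}) (which satisfies s₀ ≤ 1). If 0 < s ≤ s₀, then for every z ∈ ℝ^n and every u ∈ (0,∞)^n, zᵀ H(u) A(u) z ≥ s Σ_{i=1}^n a_{i0} u_i^{s-2} z_i² + s(s+1) Σ_{i=1}^n a_{ii} u_i^{2(s-1)} z_i². -/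
open Finset Real

noncomputable section

lemma keylem (A B C x y : ℝ) (hA : 0 ≤ A) (hB : 0 ≤ B) (hC : 0 ≤ C)
    (h : C ≤ 2 * Real.sqrt (A * B)) : 0 ≤ A * x ^ 2 + B * y ^ 2 + C * (x * y) := by
  set sa := Real.sqrt A with hsadef
  set sb := Real.sqrt B with hsbdef
  have hsa : sa ^ 2 = A := Real.sq_sqrt hA
  have hsb : sb ^ 2 = B := Real.sq_sqrt hB
  have hsa0 : 0 ≤ sa := Real.sqrt_nonneg _
  have hsb0 : 0 ≤ sb := Real.sqrt_nonneg _
  have hab : Real.sqrt (A * B) = sa * sb := Real.sqrt_mul hA B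
  rw [hab] at h
  rcases le_or_gt 0 (x * y) with hxy | hxy
  · have h1 : 0 ≤ C * (x * y) := mul_nonneg hC hxy
    nlinarith [sq_nonneg x, sq_nonneg y]
  · have h1 : 2 * (sa * sb) * (x * y) ≤ C * (x * y) :=
      mul_le_mul_of_nonpos_right h (le_of_lt hxy)
    nlinarith [sq_nonneg (sa * x + sb * y)]

theorem stmt5 (n : ℕ) [NeZero n] (s : ℝ)
    (a0 : Fin n → ℝ) (a : Fin n → Fin n → ℝ)
    (ha0 : ∀ i, 0 ≤ a0 i) (ha : ∀ i j, 0 ≤ a i j)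
    (hsum : ∀ i j, 0 < a i j + a j i)
    (s0 : ℝ)
    (hs0 : s0 = Finset.univ.inf' Finset.univ_nonempty
      (fun p : Fin n × Fin n =>
        2 * Real.sqrt (a p.1 p.2 * a p.2 p.1) / (a p.1 p.2 + a p.2 p.1)))
    (hs : 0 < s) (hss0 : s ≤ s0) :
    s0 ≤ 1 ∧
      ∀ (z u : Fin n → ℝ), (∀ i, 0 < u i) →
        s * ∑ i, a0 i * u i ^ (s - 2) * z i ^ 2
          + s * (s + 1) * ∑ i, a i i * u i ^ (2 * (s - 1)) * z i ^ 2
        ≤ quad n (matH n s (fun _ => 1) u * matA n s a0 a u) z := by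
  -- the per-pair bound on s
  have hfle : ∀ i j : Fin n, s * (a i j + a j i) ≤ 2 * Real.sqrt (a i j * a j i) := by
    intro i j
    have h1 : s ≤ 2 * Real.sqrt (a i j * a j i) / (a i j + a j i) := by
      refine hss0.trans ?_
      rw [hs0]
      exact Finset.inf'_le _ (Finset.mem_univ (i, j))
    have h2 : 0 < a i j + a j i := hsum i j
    calc s * (a i j + a j i)
        ≤ (2 * Real.sqrt (a i j * a j i) / (a i j + a j i)) * (a i j + a j i) :=
          mul_le_mul_of_nonneg_right h1 h2.le
      _ = 2 * Real.sqrt (a i j * a j i) := by field_simp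
  constructor
  · -- s0 ≤ 1
    obtain ⟨i⟩ := (inferInstance : Nonempty (Fin n))
    have haii : 0 < a i i := by have := hsum i i; linarith
    have : s0 ≤ 2 * Real.sqrt (a i i * a i i) / (a i i + a i i) := by
      rw [hs0]
      exact Finset.inf'_le _ (Finset.mem_univ (i, i))
    have hsq : Real.sqrt (a i i * a i i) = a i i := by
      rw [show a i i * a i i = a i i ^ 2 by ring, Real.sqrt_sq haii.le]
    rw [hsq] at this
    have : s0 ≤ 1 := by
      refine this.trans ?_
      rw [div_le_one (by linarith)]
      linarith
    exact this
  · intro z u hu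
    set p : Fin n → ℝ := fun i => u i ^ ((s - 2) / 2) with hpdef
    set q : Fin n → ℝ := fun i => u i ^ (s / 2) with hqdef
    have hp2 : ∀ i, p i ^ 2 = u i ^ (s - 2) := by
      intro i
      rw [hpdef]
      rw [← Real.rpow_natCast (u i ^ ((s - 2) / 2)) 2, ← Real.rpow_mul (hu i).le]
      norm_num
    have hq2 : ∀ i, q i ^ 2 = u i ^ s := by
      intro i
      rw [hqdef]
      rw [← Real.rpow_natCast (u i ^ (s / 2)) 2, ← Real.rpow_mul (hu i).le]
      norm_num
    have hpq : ∀ i, p i * q i = u i ^ (s - 1) := by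
      intro i
      rw [hpdef, hqdef]
      rw [← Real.rpow_add (hu i)]
      ring_nf
    have hpq2 : ∀ i, (p i * q i) ^ 2 = u i ^ (2 * (s - 1)) := by
      intro i
      rw [hpq i, ← Real.rpow_natCast (u i ^ (s - 1)) 2, ← Real.rpow_mul (hu i).le]
      ring_nf
    -- the quadratic form terms
    set Q : Fin n → Fin n → ℝ := fun i j =>
      s * a i j * p i ^ 2 * q j ^ 2 * z i ^ 2
        + s ^ 2 * a i j * ((p i * q i) * (p j * q j)) * (z i * z j) with hQdef
    -- the entries of H * A
    have hHA : ∀ i j, (matH n s (fun _ => 1) u * matA n s a0 a u) i j =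
        (if i = j then s * p i ^ 2 * (a0 i + ∑ k, a i k * q k ^ 2) else 0)
          + s ^ 2 * a i j * ((p i * q i) * (p j * q j)) := by
      intro i j
      have h1 : (matH n s (fun _ => 1) u * matA n s a0 a u) i j
          = (s * 1 * u i ^ (s - 2)) * matA n s a0 a u i j := by
        rw [Matrix.mul_apply]
        rw [Finset.sum_eq_single i]
        · simp [matH]
        · intro k _ hk
          simp [matH, Ne.symm hk]
        · simp
      rw [h1]
      simp only [matA, Matrix.of_apply]
      have hcross : (s * 1 * u i ^ (s - 2)) * (s * a i j * u i * u j ^ (s - 1))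
          = s ^ 2 * a i j * ((p i * q i) * (p j * q j)) := by
        have hui : u i ^ (s - 2) * u i = p i * q i := by
          rw [hpq i, show s - 1 = (s - 2) + 1 by ring, Real.rpow_add_one (hu i).ne']
        rw [hpq j, ← hui]
        ring
      rcases eq_or_ne i j with rfl | hij
      · rw [if_pos rfl, if_pos rfl, mul_add, hcross]
        congr 1
        simp only [← hp2, ← hq2]
        ring
      · rw [if_neg hij, if_neg hij]
        simp only [zero_add]
        rw [hcross]
    have hquad : quad n (matH n s (fun _ => 1) u * matA n s a0 a u) z
        = (∑ i, s * a0 i * p i ^ 2 * z i ^ 2) + ∑ i, ∑ j, Q i j := by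
      unfold quad
      simp_rw [hHA]
      rw [← Finset.sum_add_distrib]
      refine Finset.sum_congr rfl fun i _ => ?_
      rw [show (∑ j, z i * ((if i = j then s * p i ^ 2 * (a0 i + ∑ k, a i k * q k ^ 2) else 0)
            + s ^ 2 * a i j * ((p i * q i) * (p j * q j))) * z j)
          = (∑ j, z i * (if i = j then s * p i ^ 2 * (a0 i + ∑ k, a i k * q k ^ 2) else 0) * z j)
            + ∑ j, z i * (s ^ 2 * a i j * ((p i * q i) * (p j * q j))) * z j by
        rw [← Finset.sum_add_distrib]; exact Finset.sum_congr rfl fun j _ => by ring]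
      have hdiag : (∑ j, z i * (if i = j then s * p i ^ 2 * (a0 i + ∑ k, a i k * q k ^ 2) else 0) * z j)
          = s * a0 i * p i ^ 2 * z i ^ 2 + ∑ k, s * a i k * p i ^ 2 * q k ^ 2 * z i ^ 2 := by
        rw [Finset.sum_eq_single i]
        · rw [if_pos rfl]
          rw [show z i * (s * p i ^ 2 * (a0 i + ∑ k, a i k * q k ^ 2)) * z i
              = s * a0 i * p i ^ 2 * z i ^ 2 + (∑ k, a i k * q k ^ 2) * (s * p i ^ 2 * z i ^ 2) by ring]
          rw [Finset.sum_mul]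
          congr 1
          exact Finset.sum_congr rfl fun k _ => by ring
        · intro j _ hj
          rw [if_neg (Ne.symm hj)]
          ring
        · simp
      rw [hdiag, add_assoc, ← Finset.sum_add_distrib]
      congr 1
      exact Finset.sum_congr rfl fun j _ => by rw [hQdef]; ring
    rw [hquad]
    -- rewrite the target in terms of p, q
    have hLHS1 : (∑ i, a0 i * u i ^ (s - 2) * z i ^ 2) = ∑ i, a0 i * p i ^ 2 * z i ^ 2 := by
      exact Finset.sum_congr rfl fun i _ => by rw [hp2 i]
    have hLHS2 : (∑ i, a i i * u i ^ (2 * (s - 1)) * z i ^ 2)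
        = ∑ i, a i i * (p i * q i) ^ 2 * z i ^ 2 := by
      exact Finset.sum_congr rfl fun i _ => by rw [hpq2 i]
    rw [hLHS1, hLHS2]
    have h1 : s * ∑ i, a0 i * p i ^ 2 * z i ^ 2 = ∑ i, s * a0 i * p i ^ 2 * z i ^ 2 := by
      rw [Finset.mul_sum]; exact Finset.sum_congr rfl fun i _ => by ring
    rw [h1]
    have main : s * (s + 1) * ∑ i, a i i * (p i * q i) ^ 2 * z i ^ 2 ≤ ∑ i, ∑ j, Q i j := by
      have hpair : ∀ i j, (if i = j then 2 * (s * (s + 1) * (a i i * (p i * q i) ^ 2 * z i ^ 2)) else 0)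
          ≤ Q i j + Q j i := by
        intro i j
        rcases eq_or_ne i j with rfl | hij
        · rw [if_pos rfl]
          exact le_of_eq (by simp only [hQdef]; ring)
        · rw [if_neg hij]
          have hkey := keylem (s * a i j) (s * a j i) (s ^ 2 * (a i j + a j i))
            (p i * q j * z i) (p j * q i * z j)
            (mul_nonneg hs.le (ha i j)) (mul_nonneg hs.le (ha j i))
            (mul_nonneg (sq_nonneg s) (hsum i j).le)
            (by
              have hsq : Real.sqrt (s * a i j * (s * a j i)) = s * Real.sqrt (a i j * a j i) := by
                rw [show s * a i j * (s * a j i) = s ^ 2 * (a i j * a j i) by ring,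
                  Real.sqrt_mul (by positivity), Real.sqrt_sq hs.le]
              rw [hsq]
              nlinarith [hfle i j])
          exact hkey.trans (le_of_eq (by simp only [hQdef]; ring))
      have h2 : ∑ i, ∑ j, (if i = j then 2 * (s * (s + 1) * (a i i * (p i * q i) ^ 2 * z i ^ 2)) else 0)
          ≤ ∑ i, ∑ j, (Q i j + Q j i) :=
        Finset.sum_le_sum fun i _ => Finset.sum_le_sum fun j _ => hpair i j
      have h3 : ∑ i, ∑ j, (if i = j then 2 * (s * (s + 1) * (a i i * (p i * q i) ^ 2 * z i ^ 2)) else 0)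
          = 2 * (s * (s + 1) * ∑ i, a i i * (p i * q i) ^ 2 * z i ^ 2) := by
        have h3a : ∀ i : Fin n, (∑ j, if i = j then 2 * (s * (s + 1) * (a i i * (p i * q i) ^ 2 * z i ^ 2)) else 0)
            = 2 * (s * (s + 1) * (a i i * (p i * q i) ^ 2 * z i ^ 2)) := by
          intro i
          rw [Finset.sum_eq_single i]
          · rw [if_pos rfl]
          · intro j _ hj; rw [if_neg (Ne.symm hj)]
          · simp
        calc (∑ i, ∑ j, if i = j then 2 * (s * (s + 1) * (a i i * (p i * q i) ^ 2 * z i ^ 2)) else 0)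
            = ∑ i, 2 * (s * (s + 1) * (a i i * (p i * q i) ^ 2 * z i ^ 2)) :=
              Finset.sum_congr rfl fun i _ => h3a i
          _ = 2 * (s * (s + 1) * ∑ i, a i i * (p i * q i) ^ 2 * z i ^ 2) := by
              rw [Finset.mul_sum, Finset.mul_sum]
      have h4 : ∑ i, ∑ j, (Q i j + Q j i) = 2 * ∑ i, ∑ j, Q i j := by
        have hc : (∑ i, ∑ j, Q j i) = ∑ i, ∑ j, Q i j := Finset.sum_comm
        calc ∑ i, ∑ j, (Q i j + Q j i)
            = (∑ i, ∑ j, Q i j) + ∑ i, ∑ j, Q j i := by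
              rw [← Finset.sum_add_distrib]
              exact Finset.sum_congr rfl fun i _ => Finset.sum_add_distrib
          _ = 2 * ∑ i, ∑ j, Q i j := by rw [hc]; ring
      rw [h3, h4] at h2
      linarith
    linarith
end
end

section
/- Let s > 1 and assume the detailed balance condition π_i a_{ij} = π_j a_{ji} for all i ≠ j. If η₁ := min_{i=1,…,n} ( a_{ii} − ((s−1)/(s+1)) Σ_{j=1, j≠i}^n a_{ij} ) > 0, then for every z ∈ ℝ^n and every u ∈ (0,∞)^n, zᵀ H(u) A(u) z ≥ s Σ_{i=1}^n π_i a_{i0} u_i^{s-2} z_i² + η₁ s(s+1) Σ_{i=1}^n π_i u_i^{2(s-1)} z_i². -/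
open Finset Real

noncomputable section

/-!
With `w_i = u_i^{s-1} z_i` and `b_{ij} = π_i a_{ij}`, `zᵀ H A z` equals
`s Σ π_i a_{i0} u_i^{s-2} z_i² + s Σ_{i,j} b_{ij} ((u_j/u_i)^s w_i² + s w_i w_j)`.
Detailed balance makes `b` symmetric, so each off-diagonal pair `{i, j}` contributes
`b_{ij} (c w_i² + c⁻¹ w_j² + 2 s w_i w_j)` with `c = (u_j/u_i)^s`, and this is at least
`-(s-1) b_{ij} (w_i² + w_j²)` because the difference is `b_{ij} (c⁻¹ (c w_i + w_j)² + (s-1)(w_i + w_j)²)`.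
What is left is the diagonal dominance `(s+1) a_{ii} - (s-1) Σ_{j≠i} a_{ij} ≥ (s+1) η₁`.
-/

section QuadraticForm

variable {K ι : Type*} [Field K] [LinearOrder K] [IsStrictOrderedRing K] [Fintype ι]
  [DecidableEq ι]

theorem sum_diag_le_sum_sum_of_add_swap_nonneg (f : ι → ι → K)
    (hf : ∀ i j, i ≠ j → 0 ≤ f i j + f j i) : ∑ i, f i i ≤ ∑ i, ∑ j, f i j := by
  have hsym : ∑ i, ∑ j, (f i j + f j i) = 2 * ∑ i, ∑ j, f i j := by
    simp only [sum_add_distrib]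
    rw [sum_comm (f := fun i j => f j i)]
    ring
  have hdiag : ∑ i, ∑ j, (if i = j then 2 * f i i else 0) ≤ ∑ i, ∑ j, (f i j + f j i) := by
    gcongr with i _ j _
    split_ifs with h
    · subst h; rw [two_mul]
    · exact hf i j h
  simp only [sum_ite_eq, mem_univ, if_true, ← mul_sum] at hdiag
  linarith

theorem inv_mul_sq_add_sq_add_two_mul_mul_nonneg {s c : K} (hs : 1 ≤ s) (hc : 0 < c) (x y : K) :
    0 ≤ c * x ^ 2 + c⁻¹ * y ^ 2 + 2 * s * x * y + (s - 1) * (x ^ 2 + y ^ 2) := by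
  have h : c * x ^ 2 + c⁻¹ * y ^ 2 + 2 * s * x * y + (s - 1) * (x ^ 2 + y ^ 2)
      = c⁻¹ * (c * x + y) ^ 2 + (s - 1) * (x + y) ^ 2 := by
    field_simp
    ring
  rw [h]
  have := sub_nonneg.mpr hs
  positivity

theorem sum_sq_mul_diag_sub_offDiag_le {s : K} (hs : 1 ≤ s) (b : ι → ι → K)
    (hb : ∀ i j, 0 ≤ b i j) (hb_symm : ∀ i j, i ≠ j → b i j = b j i)
    (r : ι → K) (hr : ∀ i, 0 < r i) (w : ι → K) :
    ∑ i, w i ^ 2 * ((s + 1) * b i i - (s - 1) * ∑ j ∈ univ.erase i, b i j)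
      ≤ ∑ i, ∑ j, b i j * (r j / r i * w i ^ 2 + s * w i * w j) := by
  set f : ι → ι → K := fun i j =>
    b i j * (r j / r i * w i ^ 2 + s * w i * w j + (s - 1) * w i ^ 2)
  have hpair : ∀ i j, i ≠ j → 0 ≤ f i j + f j i := by
    intro i j hij
    have key := inv_mul_sq_add_sq_add_two_mul_mul_nonneg hs (div_pos (hr j) (hr i)) (w i) (w j)
    rw [inv_div] at key
    have : f i j + f j i = b i j * (r j / r i * w i ^ 2 + r i / r j * w j ^ 2
        + 2 * s * w i * w j + (s - 1) * (w i ^ 2 + w j ^ 2)) := by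
      simp only [f, ← hb_symm i j hij]
      ring
    rw [this]
    exact mul_nonneg (hb i j) key
  have hdiag : ∀ i, f i i = 2 * s * b i i * w i ^ 2 := fun i => by
    simp only [f, div_self (hr i).ne']
    ring
  have hrow : ∀ i, ∑ j, f i j = ∑ j, b i j * (r j / r i * w i ^ 2 + s * w i * w j)
      + (s - 1) * w i ^ 2 * (b i i + ∑ j ∈ univ.erase i, b i j) := fun i => by
    rw [add_sum_erase _ _ (mem_univ i), mul_sum, ← sum_add_distrib]
    exact sum_congr rfl fun j _ => by ring
  have hsum := sum_diag_le_sum_sum_of_add_swap_nonneg f hpair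
  simp only [hdiag, hrow, sum_add_distrib] at hsum
  calc ∑ i, w i ^ 2 * ((s + 1) * b i i - (s - 1) * ∑ j ∈ univ.erase i, b i j)
      = ∑ i, 2 * s * b i i * w i ^ 2
        - ∑ i, (s - 1) * w i ^ 2 * (b i i + ∑ j ∈ univ.erase i, b i j) := by
        rw [← sum_sub_distrib]
        exact sum_congr rfl fun i _ => by ring
    _ ≤ _ := by linarith

end QuadraticForm

theorem matH_eq_diagonal (n : ℕ) (s : ℝ) (P u : Fin n → ℝ) :
    matH n s P u = Matrix.diagonal fun i => s * P i * u i ^ (s - 2) := by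
  ext i j
  simp [matH, Matrix.diagonal_apply]

theorem quad_matH_mul_matA (n : ℕ) (s : ℝ) (a0 : Fin n → ℝ) (a : Fin n → Fin n → ℝ)
    (P z u : Fin n → ℝ) (hu : ∀ i, 0 < u i) :
    quad n (matH n s P u * matA n s a0 a u) z
      = s * ∑ i, P i * a0 i * u i ^ (s - 2) * z i ^ 2
        + s * ∑ i, ∑ j, P i * a i j * (u j ^ s / u i ^ s * (u i ^ (s - 1) * z i) ^ 2
          + s * (u i ^ (s - 1) * z i) * (u j ^ (s - 1) * z j)) := by
  have hu0 : ∀ i, u i ≠ 0 := fun i => (hu i).ne'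
  have hv0 : ∀ i, u i ^ (s - 1) ≠ 0 := fun i => (rpow_pos_of_pos (hu i) _).ne'
  have hpow_sub : ∀ i, u i ^ (s - 2) = u i ^ (s - 1) / u i := fun i => by
    rw [← rpow_sub_one (hu0 i), sub_sub]
    norm_num
  have hpow : ∀ i, u i ^ s = u i ^ (s - 1) * u i := fun i => by
    rw [← rpow_add_one (hu0 i), sub_add_cancel]
  simp only [quad, matH_eq_diagonal, Matrix.diagonal_mul, matA, Matrix.of_apply, mul_add,
    add_mul, sum_add_distrib, ite_mul, mul_ite, zero_mul, mul_zero, sum_ite_eq, mem_univ,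
    if_true, mul_sum, hpow_sub, hpow]
  rw [add_assoc]
  congr 1
  · exact sum_congr rfl fun i _ => by ring
  congr 1
  · refine sum_congr rfl fun i _ => ?_
    rw [sum_mul]
    exact sum_congr rfl fun j _ => by field_simp [hu0 i, hv0 i]
  · exact sum_congr rfl fun i _ => sum_congr rfl fun j _ => by field_simp [hu0 i]

theorem stmt7_general (n : ℕ) [NeZero n] (s : ℝ) (hs : 1 < s)
    (a0 : Fin n → ℝ) (a : Fin n → Fin n → ℝ) (P : Fin n → ℝ)
    (ha : ∀ i j, 0 ≤ a i j) (hP : ∀ i, 0 < P i)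
    (hdb : ∀ i j, i ≠ j → P i * a i j = P j * a j i)
    (η1 : ℝ)
    (hη1 : η1 = Finset.univ.inf' Finset.univ_nonempty
      (fun i => a i i - (s - 1) / (s + 1) * ∑ j ∈ Finset.univ.erase i, a i j)) :
    ∀ (z u : Fin n → ℝ), (∀ i, 0 < u i) →
      s * ∑ i, P i * a0 i * u i ^ (s - 2) * z i ^ 2
        + η1 * (s * (s + 1)) * ∑ i, P i * u i ^ (2 * (s - 1)) * z i ^ 2
      ≤ quad n (matH n s P u * matA n s a0 a u) z := by
  intro z u hu
  set w : Fin n → ℝ := fun i => u i ^ (s - 1) * z i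
  have hw : ∀ i, u i ^ (2 * (s - 1)) * z i ^ 2 = w i ^ 2 := fun i => by
    rw [two_mul, rpow_add (hu i)]
    ring
  have hη : ∀ i, η1 * (s + 1) ≤ (s + 1) * a i i - (s - 1) * ∑ j ∈ univ.erase i, a i j := by
    intro i
    have hle : η1 ≤ a i i - (s - 1) / (s + 1) * ∑ j ∈ univ.erase i, a i j :=
      hη1 ▸ inf'_le _ (mem_univ i)
    calc η1 * (s + 1) ≤ (a i i - (s - 1) / (s + 1) * ∑ j ∈ univ.erase i, a i j) * (s + 1) := by
          gcongr
      _ = _ := by field_simp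
  have hform := sum_sq_mul_diag_sub_offDiag_le hs.le (fun i j => P i * a i j)
    (fun i j => mul_nonneg (hP i).le (ha i j)) hdb (fun i => u i ^ s)
    (fun i => rpow_pos_of_pos (hu i) s) w
  rw [quad_matH_mul_matA n s a0 a P z u hu]
  calc _ = s * ∑ i, P i * a0 i * u i ^ (s - 2) * z i ^ 2
        + s * ∑ i, w i ^ 2 * (P i * (η1 * (s + 1))) := by
        congr 1
        simp only [mul_assoc, hw, mul_sum]
        exact sum_congr rfl fun i _ => by ring
    _ ≤ s * ∑ i, P i * a0 i * u i ^ (s - 2) * z i ^ 2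
        + s * ∑ i, w i ^ 2 * ((s + 1) * (P i * a i i)
          - (s - 1) * ∑ j ∈ univ.erase i, P i * a i j) := by
        gcongr with i
        rw [← mul_sum]
        nlinarith [hη i, hP i]
    _ ≤ _ := by gcongr

theorem stmt7 (n : ℕ) [NeZero n] (s : ℝ) (hs : 1 < s)
    (a0 : Fin n → ℝ) (a : Fin n → Fin n → ℝ) (P : Fin n → ℝ)
    (ha0 : ∀ i, 0 ≤ a0 i) (ha : ∀ i j, 0 ≤ a i j) (hP : ∀ i, 0 < P i)
    (hdb : ∀ i j, i ≠ j → P i * a i j = P j * a j i)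
    (η1 : ℝ)
    (hη1 : η1 = Finset.univ.inf' Finset.univ_nonempty
      (fun i => a i i - (s - 1) / (s + 1) * ∑ j ∈ Finset.univ.erase i, a i j))
    (hpos : 0 < η1) :
    ∀ (z u : Fin n → ℝ), (∀ i, 0 < u i) →
      s * ∑ i, P i * a0 i * u i ^ (s - 2) * z i ^ 2
        + η1 * (s * (s + 1)) * ∑ i, P i * u i ^ (2 * (s - 1)) * z i ^ 2
      ≤ quad n (matH n s P u * matA n s a0 a u) z :=
  stmt7_general n s hs a0 a P ha hP hdb η1 hη1
end
end

section
/- Let s > 0. For every ε > 0, every real η < 1/2, every z ∈ ℝ^n, and every u ∈ (0,∞)^n, zᵀ H_ε(u) A_ε(u) z ≥ zᵀ H(u) A(u) z + ε^η s Σ_{i=1}^n π_i u_i^{s-1} z_i² + ε^{η+1} Σ_{i=1}^n z_i². -/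
open Finset Real

noncomputable section

/-- `μ_i := (π_i/2) Σ_{j≠i} (a_{ji}/π_i + a_{ij}/π_j)`. -/
def muCoef (n : ℕ) (a : Fin n → Fin n → ℝ) (P : Fin n → ℝ) (i : Fin n) : ℝ :=
  P i / 2 * ∑ j ∈ Finset.univ.erase i, (a j i / P i + a i j / P j)

/-- `H⁰_{ij}(u) = δ_{ij} u_i⁻¹`. -/
def matH0 (n : ℕ) (u : Fin n → ℝ) : Matrix (Fin n) (Fin n) ℝ :=
  Matrix.of fun i j => if i = j then (u i)⁻¹ else 0

/-- `A⁰_{ij}(u) = δ_{ij} (u_i/π_i) μ_i − (1−δ_{ij}) (u_i/π_i) a_{ji}`. -/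
def matA0 (n : ℕ) (a : Fin n → Fin n → ℝ) (P : Fin n → ℝ) (u : Fin n → ℝ) :
    Matrix (Fin n) (Fin n) ℝ :=
  Matrix.of fun i j =>
    if i = j then u i / P i * muCoef n a P i else -(u i / P i * a j i)

/-- `A¹_{ij}(u) = δ_{ij} u_i`. -/
def matA1 (n : ℕ) (u : Fin n → ℝ) : Matrix (Fin n) (Fin n) ℝ :=
  Matrix.of fun i j => if i = j then u i else 0

lemma quad_diag_mul {n : ℕ} (c : Fin n → ℝ) (M : Matrix (Fin n) (Fin n) ℝ) (z : Fin n → ℝ) :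
    quad n (Matrix.diagonal c * M) z = ∑ i, ∑ j, z i * (c i * M i j) * z j := by
  simp [quad, Matrix.diagonal_mul]

lemma offdiag_swap {n : ℕ} (g : Fin n → Fin n → ℝ) :
    ∑ i, ∑ j ∈ Finset.univ.erase i, g i j = ∑ i, ∑ j ∈ Finset.univ.erase i, g j i := by
  have h : ∀ (f : Fin n → Fin n → ℝ), (∑ i, ∑ j ∈ Finset.univ.erase i, f i j)
      = (∑ i, ∑ j, f i j) - ∑ i, f i i := by
    intro f
    rw [← Finset.sum_sub_distrib]
    exact Finset.sum_congr rfl fun i _ => (Finset.sum_erase_eq_sub (Finset.mem_univ i))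
  rw [h, h, Finset.sum_comm]

lemma scal1 (uu pp zz T : ℝ) (hu : uu ≠ 0) (hp : pp ≠ 0) :
    zz * (uu⁻¹ * (uu / pp * (pp / 2 * T))) * zz = T / 2 * zz ^ 2 := by
  field_simp

lemma scal2 (uu pp c zi zj : ℝ) (hu : uu ≠ 0) (hp : pp ≠ 0) :
    zi * (uu⁻¹ * -(uu / pp * c)) * zj = -(c / pp * (zi * zj)) := by
  field_simp

lemma scal3 (sv pv x uu c zi zj : ℝ) (hp : pv ≠ 0) :
    zi * ((sv * pv * x) * -(uu / pv * c)) * zj = -(sv * (x * uu) * c * (zi * zj)) := by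
  field_simp

lemma scal4 (sv pv x uu m zz : ℝ) (hp : pv ≠ 0) :
    zz * ((sv * pv * x) * (uu / pv * m)) * zz = sv * (x * uu) * m * zz ^ 2 := by
  field_simp

lemma scal5 (uu D sv c w zz : ℝ) (hu : uu ≠ 0) :
    zz * (uu⁻¹ * (D + sv * c * uu * w)) * zz = uu⁻¹ * D * zz ^ 2 + sv * c * w * (zz * zz) := by
  field_simp

lemma scal6 (uu sv c w zi zj : ℝ) (hu : uu ≠ 0) :
    zi * (uu⁻¹ * (sv * c * uu * w)) * zj = sv * c * w * (zi * zj) := by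
  field_simp

theorem stmt10 (n : ℕ) (hn : 1 ≤ n) (s : ℝ) (hs : 0 < s)
    (a0 : Fin n → ℝ) (a : Fin n → Fin n → ℝ) (P : Fin n → ℝ)
    (ha0 : ∀ i, 0 ≤ a0 i) (ha : ∀ i j, 0 ≤ a i j) (hP : ∀ i, 0 < P i)
    (ε η : ℝ) (hε : 0 < ε) (hη : η < 1 / 2)
    (z u : Fin n → ℝ) (hu : ∀ i, 0 < u i) :
    quad n (matH n s P u * matA n s a0 a u) z
      + ε ^ η * s * ∑ i, P i * u i ^ (s - 1) * z i ^ 2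
      + ε ^ (η + 1) * ∑ i, z i ^ 2
    ≤ quad n ((matH n s P u + ε • matH0 n u)
        * (matA n s a0 a u + ε • matA0 n a P u + ε ^ η • matA1 n u)) z := by
  have hu0 : ∀ i, u i ≠ 0 := fun i => (hu i).ne'
  have hP0 : ∀ i, P i ≠ 0 := fun i => (hP i).ne'
  have hpow : ∀ i, u i ^ (s - 1) = u i ^ (s - 2) * u i := fun i => by
    rw [← Real.rpow_add_one (hu0 i) (s - 2)]; congr 1; ring
  have hus1 : ∀ i, (0:ℝ) ≤ u i ^ (s - 1) := fun i => Real.rpow_nonneg (hu i).le _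
  have hmu : ∀ i, 0 ≤ muCoef n a P i := fun i => by
    unfold muCoef
    refine mul_nonneg (div_nonneg (hP i).le (by norm_num)) (Finset.sum_nonneg fun j _ => ?_)
    exact add_nonneg (div_nonneg (ha j i) (hP i).le) (div_nonneg (ha i j) (hP j).le)
  -- diagonal form of Hε
  have hHe : matH n s P u + ε • matH0 n u
      = Matrix.diagonal (fun i => s * P i * u i ^ (s - 2) + ε * (u i)⁻¹) := by
    ext i j
    by_cases h : i = j <;>
      simp [matH, matH0, Matrix.add_apply, Matrix.smul_apply, Matrix.diagonal_apply, h,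
        smul_eq_mul]
  have hHd : matH n s P u = Matrix.diagonal (fun i => s * P i * u i ^ (s - 2)) := by
    ext i j
    by_cases h : i = j <;> simp [matH, Matrix.diagonal_apply, h]
  have hAe : ∀ i j, (matA n s a0 a u + ε • matA0 n a P u + ε ^ η • matA1 n u) i j
      = matA n s a0 a u i j + ε * matA0 n a P u i j + ε ^ η * matA1 n u i j := by
    intro i j
    simp [Matrix.add_apply, Matrix.smul_apply, smul_eq_mul]
  set S1 := ∑ i, ∑ j, z i * ((s * P i * u i ^ (s - 2)) * matA0 n a P u i j) * z j with hS1def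
  set S2 := ∑ i, ∑ j, z i * ((u i)⁻¹ * matA n s a0 a u i j) * z j with hS2def
  set S3 := ∑ i, ∑ j, z i * ((u i)⁻¹ * matA0 n a P u i j) * z j with hS3def
  -- evaluate the A1-pieces
  have eA1H : (∑ i, ∑ j, z i * ((s * P i * u i ^ (s - 2)) * matA1 n u i j) * z j)
      = s * ∑ i, P i * u i ^ (s - 1) * z i ^ 2 := by
    rw [Finset.mul_sum]
    refine Finset.sum_congr rfl fun i _ => ?_
    simp only [matA1, Matrix.of_apply, mul_ite, ite_mul, mul_zero, zero_mul,
      Finset.sum_ite_eq, Finset.mem_univ, if_pos]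
    rw [hpow i]; ring
  have eA1H0 : (∑ i, ∑ j, z i * ((u i)⁻¹ * matA1 n u i j) * z j) = ∑ i, z i ^ 2 := by
    refine Finset.sum_congr rfl fun i _ => ?_
    simp only [matA1, Matrix.of_apply, mul_ite, ite_mul, mul_zero, zero_mul,
      Finset.sum_ite_eq, Finset.mem_univ, if_pos]
    rw [inv_mul_cancel₀ (hu0 i)]; ring
  -- main expansion
  have key : quad n ((matH n s P u + ε • matH0 n u)
        * (matA n s a0 a u + ε • matA0 n a P u + ε ^ η • matA1 n u)) z
      = quad n (matH n s P u * matA n s a0 a u) z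
        + ε ^ η * s * (∑ i, P i * u i ^ (s - 1) * z i ^ 2)
        + ε ^ (η + 1) * (∑ i, z i ^ 2)
        + (ε * (S1 + S2) + ε * ε * S3) := by
    rw [hHe, quad_diag_mul]
    have h1 : quad n (matH n s P u * matA n s a0 a u) z
        = ∑ i, ∑ j, z i * ((s * P i * u i ^ (s - 2)) * matA n s a0 a u i j) * z j := by
      rw [hHd, quad_diag_mul]
    have hee : ε ^ (η + 1) = ε ^ η * ε := Real.rpow_add_one hε.ne' η
    rw [h1, hS1def, hS2def, hS3def, mul_assoc (ε ^ η) s, ← eA1H, ← eA1H0, hee]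
    simp only [hAe, Finset.mul_sum, ← Finset.sum_add_distrib]
    refine Finset.sum_congr rfl fun i _ => Finset.sum_congr rfl fun j _ => ?_
    ring
  -- S3 ≥ 0
  have step1 : S3 = ∑ i, ∑ j ∈ Finset.univ.erase i,
      ((a j i / P i + a i j / P j) / 2 * z i ^ 2 - a j i / P i * (z i * z j)) := by
    rw [hS3def]
    refine Finset.sum_congr rfl fun i _ => ?_
    rw [← Finset.add_sum_erase _ _ (Finset.mem_univ i)]
    have hdiag : z i * ((u i)⁻¹ * matA0 n a P u i i) * z i
        = ∑ j ∈ Finset.univ.erase i, (a j i / P i + a i j / P j) / 2 * z i ^ 2 := by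
      have hsum : (∑ j ∈ Finset.univ.erase i, (a j i / P i + a i j / P j) / 2 * z i ^ 2)
          = (∑ j ∈ Finset.univ.erase i, (a j i / P i + a i j / P j)) / 2 * z i ^ 2 := by
        rw [Finset.sum_div, Finset.sum_mul]
      rw [hsum]
      simp only [matA0, Matrix.of_apply, if_pos rfl, muCoef]
      exact scal1 _ _ _ _ (hu0 i) (hP0 i)
    rw [hdiag, ← Finset.sum_add_distrib]
    refine Finset.sum_congr rfl fun j hj => ?_
    have hij : ¬ i = j := fun h => (Finset.mem_erase.mp hj).1 h.symm
    simp only [matA0, Matrix.of_apply, if_neg hij]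
    rw [scal2 _ _ _ _ _ (hu0 i) (hP0 i)]
    ring
  have step2 : (∑ i, ∑ j ∈ Finset.univ.erase i,
        ((a j i / P i + a i j / P j) / 2 * z i ^ 2 - a j i / P i * (z i * z j)))
      = ∑ i, ∑ j ∈ Finset.univ.erase i, a j i / P i / 2 * (z i - z j) ^ 2 := by
    have hsw := offdiag_swap (fun i j => a i j / P j / 2 * z i ^ 2)
    have split : (∑ i, ∑ j ∈ Finset.univ.erase i,
          ((a j i / P i + a i j / P j) / 2 * z i ^ 2 - a j i / P i * (z i * z j)))
        = (∑ i, ∑ j ∈ Finset.univ.erase i,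
            (a j i / P i / 2 * z i ^ 2 - a j i / P i * (z i * z j)))
          + ∑ i, ∑ j ∈ Finset.univ.erase i, a i j / P j / 2 * z i ^ 2 := by
      simp only [← Finset.sum_add_distrib]
      exact Finset.sum_congr rfl fun i _ => Finset.sum_congr rfl fun j _ => by ring
    rw [split, hsw]
    simp only [← Finset.sum_add_distrib]
    exact Finset.sum_congr rfl fun i _ => Finset.sum_congr rfl fun j _ => by ring
  have hS3pos : 0 ≤ S3 := by
    rw [step1, step2]
    refine Finset.sum_nonneg fun i _ => Finset.sum_nonneg fun j _ => ?_
    exact mul_nonneg (div_nonneg (div_nonneg (ha j i) (hP i).le) (by norm_num)) (sq_nonneg _)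
  -- S1 + S2 ≥ 0
  have hS1eq : S1 = ∑ i, ((s * u i ^ (s - 1) * muCoef n a P i * z i ^ 2
        + s * u i ^ (s - 1) * a i i * (z i * z i))
      - ∑ j, s * u i ^ (s - 1) * a j i * (z i * z j)) := by
    rw [hS1def]
    refine Finset.sum_congr rfl fun i _ => ?_
    rw [← Finset.add_sum_erase _ _ (Finset.mem_univ i)]
    have hoff : ∀ j ∈ Finset.univ.erase i,
        z i * ((s * P i * u i ^ (s - 2)) * matA0 n a P u i j) * z j
          = -(s * u i ^ (s - 1) * a j i * (z i * z j)) := by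
      intro j hj
      have hij : ¬ i = j := fun h => (Finset.mem_erase.mp hj).1 h.symm
      simp only [matA0, Matrix.of_apply, if_neg hij]
      rw [hpow i]
      exact scal3 _ _ _ _ _ _ _ (hP0 i)
    have hdiag : z i * ((s * P i * u i ^ (s - 2)) * matA0 n a P u i i) * z i
        = s * u i ^ (s - 1) * muCoef n a P i * z i ^ 2 := by
      simp only [matA0, Matrix.of_apply, if_pos rfl]
      rw [hpow i]
      exact scal4 _ _ _ _ _ _ (hP0 i)
    rw [hdiag, Finset.sum_congr rfl hoff,
      Finset.sum_erase_eq_sub (Finset.mem_univ i), Finset.sum_neg_distrib]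
    ring
  have hS2eq : S2 = ∑ i, ((u i)⁻¹ * (a0 i + ∑ k, a i k * u k ^ s) * z i ^ 2
      + ∑ j, s * a i j * u j ^ (s - 1) * (z i * z j)) := by
    rw [hS2def]
    refine Finset.sum_congr rfl fun i _ => ?_
    have hterm : ∀ j, z i * ((u i)⁻¹ * matA n s a0 a u i j) * z j
        = (if i = j then (u i)⁻¹ * (a0 i + ∑ k, a i k * u k ^ s) * z i ^ 2 else 0)
          + s * a i j * u j ^ (s - 1) * (z i * z j) := by
      intro j
      by_cases h : i = j
      · subst h
        simp only [matA, Matrix.of_apply, eq_self_iff_true, if_true]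
        exact scal5 _ _ _ _ _ _ (hu0 i)
      · simp only [matA, Matrix.of_apply, if_neg h, zero_add]
        exact scal6 _ _ _ _ _ _ (hu0 i)
    rw [Finset.sum_congr rfl (fun j _ => hterm j), Finset.sum_add_distrib,
      Finset.sum_ite_eq]
    simp
  have hcomm : (∑ i, ∑ j, s * a i j * u j ^ (s - 1) * (z i * z j))
      = ∑ i, ∑ j, s * u i ^ (s - 1) * a j i * (z i * z j) := by
    rw [Finset.sum_comm]
    exact Finset.sum_congr rfl fun i _ => Finset.sum_congr rfl fun j _ => by ring
  have hS12 : 0 ≤ S1 + S2 := by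
    rw [hS1eq, hS2eq]
    have combine : (∑ i, ((s * u i ^ (s - 1) * muCoef n a P i * z i ^ 2
          + s * u i ^ (s - 1) * a i i * (z i * z i))
        - ∑ j, s * u i ^ (s - 1) * a j i * (z i * z j)))
        + (∑ i, ((u i)⁻¹ * (a0 i + ∑ k, a i k * u k ^ s) * z i ^ 2
          + ∑ j, s * a i j * u j ^ (s - 1) * (z i * z j)))
        = (∑ i, (s * u i ^ (s - 1) * muCoef n a P i * z i ^ 2
            + s * u i ^ (s - 1) * a i i * (z i * z i)
            + (u i)⁻¹ * (a0 i + ∑ k, a i k * u k ^ s) * z i ^ 2))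
          + ((∑ i, ∑ j, s * a i j * u j ^ (s - 1) * (z i * z j))
            - ∑ i, ∑ j, s * u i ^ (s - 1) * a j i * (z i * z j)) := by
      rw [← Finset.sum_add_distrib, ← Finset.sum_sub_distrib, ← Finset.sum_add_distrib]
      exact Finset.sum_congr rfl fun i _ => by ring
    rw [combine, hcomm, sub_self, add_zero]
    refine Finset.sum_nonneg fun i _ => ?_
    have h1 : 0 ≤ s * u i ^ (s - 1) * muCoef n a P i * z i ^ 2 := by
      have := hmu i; have := hus1 i; positivity
    have h2 : 0 ≤ s * u i ^ (s - 1) * a i i * (z i * z i) := by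
      rw [show z i * z i = z i ^ 2 by ring]
      have := ha i i; have := hus1 i; positivity
    have h3 : 0 ≤ (u i)⁻¹ * (a0 i + ∑ k, a i k * u k ^ s) * z i ^ 2 := by
      have hd : 0 ≤ a0 i + ∑ k, a i k * u k ^ s :=
        add_nonneg (ha0 i) (Finset.sum_nonneg fun k _ =>
          mul_nonneg (ha i k) (Real.rpow_nonneg (hu k).le _))
      have := (hu i).le
      positivity
    linarith
  rw [key]
  have hA : 0 ≤ ε * (S1 + S2) := mul_nonneg hε.le hS12
  have hB : 0 ≤ ε * ε * S3 := mul_nonneg (mul_nonneg hε.le hε.le) hS3pos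
  linarith
end
end

section
/- For every u ∈ (0,∞)^n, the matrix product H⁰(u) A⁰(u) equals the constant matrix with (i,j)-entry δ_{ij} μ_i/π_i − (1 − δ_{ij}) a_{ji}/π_i, and this matrix is positive semi-definite, i.e. zᵀ H⁰(u) A⁰(u) z ≥ 0 for all z ∈ ℝ^n. -/
open Finset Real

noncomputable section

/-!
`H⁰(u) = diag(u)⁻¹` and `A⁰(u) = diag(u) L`, where `L = D - W` with weights `W_{ij} = a_{ji}/π_i`
and `D` the diagonal of the averaged row and column sums of `W`, so that `μ_i/π_i = D_i - W_{ii}`.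
Hence `H⁰A⁰ = L`, and `zᵀ L z = ½ Σ_{i,j} W_{ij} (z_i - z_j)² ≥ 0`.
-/

namespace Matrix

variable {ι : Type*} [Fintype ι] [DecidableEq ι]

def symmLaplacian (w : Matrix ι ι ℝ) : Matrix ι ι ℝ :=
  diagonal (fun i => (∑ k, w i k + ∑ k, w k i) / 2) - w

theorem sum_sum_mul_symmLaplacian_mul (w : Matrix ι ι ℝ) (z : ι → ℝ) :
    ∑ i, ∑ j, z i * symmLaplacian w i j * z j = ∑ i, ∑ j, w i j * (z i - z j) ^ 2 / 2 := by
  have hcol : ∑ i, ∑ j, w i j * z j ^ 2 = ∑ i, (∑ k, w k i) * z i ^ 2 := by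
    rw [Finset.sum_comm]; simp only [Finset.sum_mul]
  have hrow : ∑ i, ∑ j, w i j * z i ^ 2 = ∑ i, (∑ k, w i k) * z i ^ 2 := by
    simp only [Finset.sum_mul]
  have hsq : ∀ i j, w i j * (z i - z j) ^ 2 / 2
      = (w i j * z i ^ 2 + w i j * z j ^ 2) / 2 - z i * w i j * z j := fun i j => by ring
  simp only [symmLaplacian, sub_apply, diagonal_apply, mul_sub, sub_mul, Finset.sum_sub_distrib,
    mul_ite, ite_mul, mul_zero, zero_mul, Finset.sum_ite_eq, Finset.mem_univ, if_true, hsq,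
    ← Finset.sum_div, Finset.sum_add_distrib, hcol, hrow]
  congr 1
  rw [← Finset.sum_add_distrib, Finset.sum_div]
  exact Finset.sum_congr rfl fun i _ => by ring

end Matrix

open Matrix

section

variable {n : ℕ} {a : Fin n → Fin n → ℝ} {P : Fin n → ℝ}

theorem muCoef_div_eq (hP : ∀ i, P i ≠ 0) (i : Fin n) :
    muCoef n a P i / P i = (∑ k, a k i / P i + ∑ k, a i k / P k) / 2 - a i i / P i := by
  rw [muCoef, Finset.sum_erase_eq_sub (Finset.mem_univ i), Finset.sum_add_distrib]
  field_simp [hP i]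
  ring

theorem symmLaplacian_eq_of_muCoef (hP : ∀ i, P i ≠ 0) :
    symmLaplacian (of fun i j => a j i / P i)
      = of fun i j => if i = j then muCoef n a P i / P i else -(a j i / P i) := by
  ext i j
  by_cases h : i = j
  · subst h
    simp [symmLaplacian, muCoef_div_eq hP]
  · simp [symmLaplacian, h]

theorem matH0_eq_diagonal (u : Fin n → ℝ) : matH0 n u = diagonal fun i => (u i)⁻¹ := by
  ext i j
  simp [matH0, diagonal_apply]

theorem matA0_eq_diagonal_mul (hP : ∀ i, P i ≠ 0) (u : Fin n → ℝ) :
    matA0 n a P u = diagonal u * symmLaplacian (of fun i j => a j i / P i) := by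
  rw [symmLaplacian_eq_of_muCoef hP]
  ext i j
  by_cases h : i = j <;> simp [matA0, h] <;> ring

theorem matH0_mul_matA0 (hP : ∀ i, P i ≠ 0) {u : Fin n → ℝ} (hu : ∀ i, u i ≠ 0) :
    matH0 n u * matA0 n a P u = symmLaplacian (of fun i j => a j i / P i) := by
  rw [matH0_eq_diagonal, matA0_eq_diagonal_mul hP, ← Matrix.mul_assoc, diagonal_mul_diagonal]
  simp [inv_mul_cancel₀ (hu _)]

end

theorem stmt11_general (n : ℕ)
    (a : Fin n → Fin n → ℝ) (P : Fin n → ℝ)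
    (ha : ∀ i j, 0 ≤ a i j) (hP : ∀ i, 0 < P i) :
    ∀ u : Fin n → ℝ, (∀ i, 0 < u i) →
      (matH0 n u * matA0 n a P u
          = Matrix.of fun i j =>
              if i = j then muCoef n a P i / P i else -(a j i / P i))
        ∧ ∀ z : Fin n → ℝ, 0 ≤ quad n (matH0 n u * matA0 n a P u) z := by
  intro u hu
  have hP0 : ∀ i, P i ≠ 0 := fun i => (hP i).ne'
  have hprod := matH0_mul_matA0 (a := a) hP0 fun i => (hu i).ne'
  refine ⟨hprod.trans (symmLaplacian_eq_of_muCoef hP0), fun z => ?_⟩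
  rw [hprod, quad, sum_sum_mul_symmLaplacian_mul]
  exact Finset.sum_nonneg fun i _ => Finset.sum_nonneg fun j _ =>
    div_nonneg (mul_nonneg (div_nonneg (ha j i) (hP i).le) (sq_nonneg _)) zero_le_two

theorem stmt11 (n : ℕ) (hn : 1 ≤ n)
    (a : Fin n → Fin n → ℝ) (P : Fin n → ℝ)
    (ha : ∀ i j, 0 ≤ a i j) (hP : ∀ i, 0 < P i) :
    ∀ u : Fin n → ℝ, (∀ i, 0 < u i) →
      (matH0 n u * matA0 n a P u
          = Matrix.of fun i j =>
              if i = j then muCoef n a P i / P i else -(a j i / P i))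
        ∧ ∀ z : Fin n → ℝ, 0 ≤ quad n (matH0 n u * matA0 n a P u) z :=
  stmt11_general n a P ha hP
end
end

section
/- Let s > 0. For every z ∈ ℝ^n and every u ∈ (0,∞)^n, zᵀ ( H⁰(u) A(u) + H(u) A⁰(u) ) z ≥ Σ_{i=1}^n ( a_{i0} u_i^{-1} + s a_{ii} u_i^{s-1} ) z_i². -/
open Finset Real

noncomputable section

theorem stmt12 (n : ℕ) (hn : 1 ≤ n) (s : ℝ) (hs : 0 < s)
    (a0 : Fin n → ℝ) (a : Fin n → Fin n → ℝ) (P : Fin n → ℝ)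
    (ha0 : ∀ i, 0 ≤ a0 i) (ha : ∀ i j, 0 ≤ a i j) (hP : ∀ i, 0 < P i)
    (z u : Fin n → ℝ) (hu : ∀ i, 0 < u i) :
    ∑ i, (a0 i * (u i)⁻¹ + s * a i i * u i ^ (s - 1)) * z i ^ 2
      ≤ quad n (matH0 n u * matA n s a0 a u + matH n s P u * matA0 n a P u) z := by
  classical
  set M := matH0 n u * matA n s a0 a u + matH n s P u * matA0 n a P u with hMdef
  set g : Fin n → Fin n → ℝ := fun i j => s * a i j * u j ^ (s - 1) * z i * z j with hg
  set diag : Fin n → ℝ := fun i =>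
    ((u i)⁻¹ * (a0 i + ∑ k, a i k * u k ^ s) + s * u i ^ (s - 1) * muCoef n a P i) * z i ^ 2
    with hdiag
  have hpow : ∀ i : Fin n, s * P i * u i ^ (s - 2) * (u i / P i) = s * u i ^ (s - 1) := by
    intro i
    have hPne : P i ≠ 0 := (hP i).ne'
    rw [show (s - 1) = (s - 2) + 1 by ring, Real.rpow_add (hu i), Real.rpow_one]
    field_simp
  have hM : ∀ i j, M i j
      = (if i = j then (u i)⁻¹ * (a0 i + ∑ k, a i k * u k ^ s)
            + s * u i ^ (s - 1) * muCoef n a P i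
          else -(s * u i ^ (s - 1) * a j i))
        + s * a i j * u j ^ (s - 1) := by
    intro i j
    have hune : u i ≠ 0 := (hu i).ne'
    have hui : (u i)⁻¹ * (s * a i j * u i * u j ^ (s - 1)) = s * a i j * u j ^ (s - 1) := by
      field_simp
    simp only [hMdef, Matrix.add_apply, Matrix.mul_apply, matH0, matA, matH, matA0,
      Matrix.of_apply, ite_mul, zero_mul, Finset.sum_ite_eq, Finset.mem_univ, if_true]
    by_cases h : i = j
    · subst h
      rw [mul_add, hui]
      simp only [if_pos trivial]
      linear_combination (muCoef n a P i) * hpow i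
    · rw [mul_add, hui]
      simp only [if_neg h, if_pos trivial]
      linear_combination (-(a j i)) * hpow i
  have hquad : quad n M z = ∑ i, (diag i + g i i) := by
    have step1 : ∀ i : Fin n, ∑ j, z i * M i j * z j
        = diag i + (∑ j, g i j) - ∑ j ∈ Finset.univ.erase i, g j i := by
      intro i
      rw [← Finset.sum_erase_add Finset.univ (fun j => z i * M i j * z j) (Finset.mem_univ i),
        ← Finset.sum_erase_add Finset.univ (fun j => g i j) (Finset.mem_univ i)]
      have h1 : ∀ j ∈ Finset.univ.erase i, z i * M i j * z j = g i j - g j i := by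
        intro j hj
        have hij : i ≠ j := fun h => (Finset.mem_erase.mp hj).1 h.symm
        rw [hM i j, if_neg hij, hg]
        simp only
        ring
      have h2 : z i * M i i * z i = diag i + g i i := by
        rw [hM i i, if_pos rfl, hdiag, hg]
        simp only
        ring
      rw [Finset.sum_congr rfl h1, h2, Finset.sum_sub_distrib]
      ring
    have step2 : ∑ i, ∑ j ∈ Finset.univ.erase i, g j i
        = (∑ i, ∑ j, g i j) - ∑ i, g i i := by
      have : ∀ i : Fin n, ∑ j ∈ Finset.univ.erase i, g j i = (∑ j, g j i) - g i i := by
        intro i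
        rw [← Finset.sum_erase_add Finset.univ (fun j => g j i) (Finset.mem_univ i)]
        ring
      rw [Finset.sum_congr rfl fun i _ => this i, Finset.sum_sub_distrib, Finset.sum_comm]
    rw [quad, Finset.sum_congr rfl fun i _ => step1 i, Finset.sum_sub_distrib,
      Finset.sum_add_distrib, step2]
    ring_nf
    rw [Finset.sum_add_distrib]
  rw [hquad]
  apply Finset.sum_le_sum
  intro i _
  have hgii : g i i = s * a i i * u i ^ (s - 1) * z i ^ 2 := by rw [hg]; ring
  have hmu : 0 ≤ muCoef n a P i := by
    rw [muCoef]
    apply mul_nonneg (div_nonneg (hP i).le (by norm_num))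
    apply Finset.sum_nonneg
    intro j _
    exact add_nonneg (div_nonneg (ha j i) (hP i).le) (div_nonneg (ha i j) (hP j).le)
  have hsum : 0 ≤ ∑ k, a i k * u k ^ s := by
    apply Finset.sum_nonneg
    intro k _
    exact mul_nonneg (ha i k) (Real.rpow_nonneg (hu k).le s)
  have hupow : (0:ℝ) ≤ u i ^ (s - 1) := Real.rpow_nonneg (hu i).le _
  have huinv : (0:ℝ) ≤ (u i)⁻¹ := inv_nonneg.mpr (hu i).le
  rw [hgii, hdiag]
  simp only
  nlinarith [mul_nonneg (mul_nonneg huinv hsum) (sq_nonneg (z i)),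
    mul_nonneg (mul_nonneg (mul_nonneg hs.le hupow) hmu) (sq_nonneg (z i))]
end
end

section
/- Assume the coefficients (a_{ij}) satisfy (A1) and (A2). Then there exists a vector π = (π_1, …, π_n) with π_i > 0 for all i and Σ_{i=1}^n π_i = 1 such that the detailed balance condition π_i a_{ij} = π_j a_{ji} holds for all i, j = 1, …, n. -/
open Finset

/-- Condition (A1): for all `i, j`, either `a_{ij} = a_{ji} = 0` or `a_{ij} a_{ji} > 0`. -/
def condA1 (n : ℕ) (a : Fin n → Fin n → ℝ) : Prop :=
  ∀ i j, (a i j = 0 ∧ a j i = 0) ∨ 0 < a i j * a j i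

/-- Condition (A2): for every periodic cycle `i_0, i_1, …, i_m, i_{m+1} = i_0`,
`∏_{k=0}^m a_{i_k, i_{k+1}} = ∏_{k=0}^m a_{i_{k+1}, i_k}`. -/
def condA2 (n : ℕ) (a : Fin n → Fin n → ℝ) : Prop :=
  ∀ (m : ℕ) (c : ℕ → Fin n), c (m + 1) = c 0 →
    ∏ k ∈ Finset.range (m + 1), a (c k) (c (k + 1))
      = ∏ k ∈ Finset.range (m + 1), a (c (k + 1)) (c k)

namespace DetBal

variable {n : ℕ} (a : Fin n → Fin n → ℝ)

/-- a walk along positive edges -/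
def IsPath (m : ℕ) (c : ℕ → Fin n) : Prop := ∀ k < m, 0 < a (c k) (c (k + 1))

noncomputable def F (m : ℕ) (c : ℕ → Fin n) : ℝ :=
  ∏ k ∈ Finset.range m, a (c k) (c (k + 1))

noncomputable def B (m : ℕ) (c : ℕ → Fin n) : ℝ :=
  ∏ k ∈ Finset.range m, a (c (k + 1)) (c k)

noncomputable def W (m : ℕ) (c : ℕ → Fin n) : ℝ :=
  ∏ k ∈ Finset.range m, a (c k) (c (k + 1)) / a (c (k + 1)) (c k)

variable {a}

lemma back_pos (ha : ∀ i j, 0 ≤ a i j) (hA1 : condA1 n a) {i j : Fin n}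
    (h : 0 < a i j) : 0 < a j i := by
  rcases hA1 i j with ⟨h1, _⟩ | h2
  · simp [h1] at h
  · rcases (ha j i).lt_or_eq with h3 | h3
    · exact h3
    · exfalso; rw [← h3] at h2; simp at h2

lemma F_pos {m c} (hp : IsPath a m c) : 0 < F a m c :=
  Finset.prod_pos fun k hk => hp k (Finset.mem_range.1 hk)

lemma B_pos (ha : ∀ i j, 0 ≤ a i j) (hA1 : condA1 n a) {m c} (hp : IsPath a m c) :
    0 < B a m c :=
  Finset.prod_pos fun k hk => back_pos ha hA1 (hp k (Finset.mem_range.1 hk))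

lemma W_eq_div (m : ℕ) (c : ℕ → Fin n) : W a m c = F a m c / B a m c := by
  simp [W, F, B, Finset.prod_div_distrib]

lemma W_pos (ha : ∀ i j, 0 ≤ a i j) (hA1 : condA1 n a) {m c} (hp : IsPath a m c) :
    0 < W a m c := by
  rw [W_eq_div]; exact div_pos (F_pos hp) (B_pos ha hA1 hp)

/-- Path independence of the weight, from (A2). -/
lemma W_indep (ha : ∀ i j, 0 ≤ a i j) (hA1 : condA1 n a) (hA2 : condA2 n a)
    {m m' : ℕ} {c c' : ℕ → Fin n} (hp : IsPath a m c) (hp' : IsPath a m' c')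
    (h0 : c 0 = c' 0) (h1 : c m = c' m') : W a m c = W a m' c' := by
  rcases Nat.eq_zero_or_pos (m + m') with hL | hL
  · obtain ⟨hm, hm'⟩ : m = 0 ∧ m' = 0 := by omega
    simp [W, hm, hm']
  -- build the closed cycle d : go along c, then back along c'
  set d : ℕ → Fin n := fun k => if k ≤ m then c k else c' (m + m' - k) with hd
  have hd1 : ∀ k ≤ m, d k = c k := fun k hk => by simp [hd, hk]
  have hd2 : ∀ l ≤ m', d (m + l) = c' (m' - l) := by
    intro l hl
    rcases Nat.eq_zero_or_pos l with h | h
    · subst h; simpa [hd] using h1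
    · have : ¬ (m + l ≤ m) := by omega
      simp only [hd, this, if_false]
      congr 1
      omega
  have hcyc : d ((m + m' - 1) + 1) = d 0 := by
    have e1 : (m + m' - 1) + 1 = m + m' := by omega
    rw [e1]
    have := hd2 m' le_rfl
    simp at this
    rw [this, hd1 0 (Nat.zero_le _), h0]
  have key := hA2 (m + m' - 1) d hcyc
  have e1 : (m + m' - 1) + 1 = m + m' := by omega
  rw [e1] at key
  -- compute both sides
  have hfwd : ∏ k ∈ Finset.range (m + m'), a (d k) (d (k + 1))
      = F a m c * B a m' c' := by
    rw [Finset.prod_range_add]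
    congr 1
    · apply Finset.prod_congr rfl
      intro k hk
      have hk := Finset.mem_range.1 hk
      rw [hd1 k (by omega), hd1 (k + 1) (by omega)]
    · rw [show B a m' c' = ∏ l ∈ Finset.range m', a (c' (l + 1)) (c' l) from rfl,
        ← Finset.prod_range_reflect (fun l => a (c' (l + 1)) (c' l)) m']
      apply Finset.prod_congr rfl
      intro l hl
      have hl := Finset.mem_range.1 hl
      rw [hd2 l (by omega), show m + l + 1 = m + (l + 1) from rfl, hd2 (l + 1) (by omega)]
      congr 2 <;> omega
  have hbwd : ∏ k ∈ Finset.range (m + m'), a (d (k + 1)) (d k)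
      = B a m c * F a m' c' := by
    rw [Finset.prod_range_add]
    congr 1
    · apply Finset.prod_congr rfl
      intro k hk
      have hk := Finset.mem_range.1 hk
      rw [hd1 k (by omega), hd1 (k + 1) (by omega)]
    · rw [show F a m' c' = ∏ l ∈ Finset.range m', a (c' l) (c' (l + 1)) from rfl,
        ← Finset.prod_range_reflect (fun l => a (c' l) (c' (l + 1))) m']
      apply Finset.prod_congr rfl
      intro l hl
      have hl := Finset.mem_range.1 hl
      rw [hd2 l (by omega), show m + l + 1 = m + (l + 1) from rfl, hd2 (l + 1) (by omega)]
      congr 2 <;> omega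
  rw [hfwd, hbwd] at key
  rw [W_eq_div, W_eq_div]
  rw [div_eq_div_iff (B_pos ha hA1 hp).ne' (B_pos ha hA1 hp').ne']
  linarith [key]

variable (a)

/-- reachability along positive edges -/
def Reach (i j : Fin n) : Prop := ∃ m c, IsPath a m c ∧ c 0 = i ∧ c m = j

variable {a}

lemma reach_refl (i : Fin n) : Reach a i i :=
  ⟨0, fun _ => i, fun k hk => absurd hk (Nat.not_lt_zero k), rfl, rfl⟩

lemma reach_symm (ha : ∀ i j, 0 ≤ a i j) (hA1 : condA1 n a) {i j : Fin n}
    (h : Reach a i j) : Reach a j i := by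
  obtain ⟨m, c, hp, h0, h1⟩ := h
  refine ⟨m, fun k => c (m - k), ?_, by simpa, by simpa⟩
  intro k hk
  dsimp only
  have e1 : m - k = (m - (k + 1)) + 1 := by omega
  rw [e1]
  exact back_pos ha hA1 (hp (m - (k + 1)) (by omega))

lemma reach_trans {i j k : Fin n} (h : Reach a i j) (h' : Reach a j k) :
    Reach a i k := by
  obtain ⟨m, c, hp, h0, h1⟩ := h
  obtain ⟨m', c', hp', h0', h1'⟩ := h'
  refine ⟨m + m', fun l => if l ≤ m then c l else c' (l - m), ?_, by simp [h0], ?_⟩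
  · intro l hl
    dsimp only
    rcases lt_or_ge l m with h2 | h2
    · simp only [show l ≤ m by omega, if_true, show l + 1 ≤ m by omega, if_true]
      exact hp l h2
    · have e1 : (if l ≤ m then c l else c' (l - m)) = c' (l - m) := by
        rcases eq_or_lt_of_le h2 with h3 | h3
        · simp [← h3, h1, ← h0']
        · simp [show ¬ l ≤ m by omega]
      have e2 : ¬ (l + 1 ≤ m) := by omega
      rw [e1]
      simp only [e2, if_false]
      have e3 : l + 1 - m = (l - m) + 1 := by omega
      rw [e3]
      exact hp' (l - m) (by omega)
  · rcases Nat.eq_zero_or_pos m' with h2 | h2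
    · subst h2
      simp only [Nat.add_zero, le_refl, if_true]
      rw [h1, ← h0']; exact h1'
    · simp only [show ¬ (m + m' ≤ m) by omega, if_false]
      rw [show m + m' - m = m' by omega, h1']

open Classical in
noncomputable def rep (a : Fin n → Fin n → ℝ) (i : Fin n) : Fin n :=
  (Finset.univ.filter fun j => Reach a i j).min' ⟨i, by simp [reach_refl]⟩

open Classical in
lemma reach_rep (i : Fin n) : Reach a i (rep a i) := by
  have := (Finset.univ.filter fun j => Reach a i j).min'_mem
    ⟨i, by simp [reach_refl]⟩
  simpa [rep] using this

open Classical in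
lemma rep_eq (ha : ∀ i j, 0 ≤ a i j) (hA1 : condA1 n a) {i j : Fin n}
    (h : Reach a i j) : rep a i = rep a j := by
  have hset : ∀ k : Fin n, Reach a i k ↔ Reach a j k := fun k =>
    ⟨fun h' => reach_trans (reach_symm ha hA1 h) h', fun h' => reach_trans h h'⟩
  unfold rep
  congr 1
  · ext k; simp [hset k]

end DetBal

open DetBal in
theorem stmt13 (n : ℕ) (hn : 1 ≤ n) (a : Fin n → Fin n → ℝ)
    (ha : ∀ i j, 0 ≤ a i j) (hA1 : condA1 n a) (hA2 : condA2 n a) :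
    ∃ P : Fin n → ℝ, (∀ i, 0 < P i) ∧ (∑ i, P i = 1) ∧
      ∀ i j, P i * a i j = P j * a j i := by
  haveI : NeZero n := ⟨by omega⟩
  have hrep : ∀ i, Reach a (rep a i) i := fun i =>
    reach_symm ha hA1 (reach_rep i)
  choose m c hpath h0 h1 using hrep
  set P0 : Fin n → ℝ := fun i => W a (m i) (c i) with hP0
  have hP0pos : ∀ i, 0 < P0 i := fun i => W_pos ha hA1 (hpath i)
  -- detailed balance for P0
  have hbal : ∀ i j, P0 i * a i j = P0 j * a j i := by
    intro i j
    rcases hA1 i j with ⟨hij, hji⟩ | hpos2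
    · rw [hij, hji]; ring
    · have hij : 0 < a i j := by
        rcases (ha i j).lt_or_eq with h | h
        · exact h
        · exfalso; rw [← h] at hpos2; simp at hpos2
      have hji : 0 < a j i := back_pos ha hA1 hij
      -- extended path from rep i to j
      set c'' : ℕ → Fin n := fun k => if k ≤ m i then c i k else j with hc''
      have hp'' : IsPath a (m i + 1) c'' := by
        intro k hk
        rcases lt_or_ge k (m i) with h2 | h2
        · simp only [hc'', show k ≤ m i by omega, if_true,
            show k + 1 ≤ m i by omega, if_true]
          exact hpath i k h2
        · have hk2 : k = m i := by omega
          subst hk2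
          simp only [hc'', le_refl, if_true, show ¬ (m i + 1 ≤ m i) by omega, if_false]
          rw [h1 i]
          exact hij
      have hreachij : Reach a i j :=
        ⟨1, fun k => if k = 0 then i else j, by
          intro k hk
          have : k = 0 := by omega
          simp [this, hij], by simp, by simp⟩
      have hrepij : rep a i = rep a j := rep_eq ha hA1 hreachij
      have hW : W a (m j) (c j) = W a (m i + 1) c'' := by
        apply W_indep ha hA1 hA2 (hpath j) hp''
        · rw [h0 j, ← hrepij, ← h0 i]
          simp [hc'']
        · rw [h1 j]
          simp [hc'', show ¬ (m i + 1 ≤ m i) by omega]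
      have hWval : W a (m i + 1) c'' = W a (m i) (c i) * (a i j / a j i) := by
        rw [W, Finset.prod_range_succ]
        congr 1
        · apply Finset.prod_congr rfl
          intro k hk
          have hk := Finset.mem_range.1 hk
          simp only [hc'', show k ≤ m i by omega, if_true,
            show k + 1 ≤ m i by omega, if_true]
        · simp only [hc'', le_refl, if_true, show ¬ (m i + 1 ≤ m i) by omega, if_false]
          rw [h1 i]
      have : P0 j = P0 i * (a i j / a j i) := by
        rw [hP0]; dsimp only; rw [hW, hWval]
      rw [this]
      field_simp
  -- normalize
  set S : ℝ := ∑ i, P0 i with hS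
  have hSpos : 0 < S := Finset.sum_pos (fun i _ => hP0pos i) ⟨⟨0, by omega⟩, Finset.mem_univ _⟩
  refine ⟨fun i => P0 i / S, fun i => div_pos (hP0pos i) hSpos, ?_, ?_⟩
  · rw [← Finset.sum_div, ← hS, div_self hSpos.ne']
  · intro i j
    have := hbal i j
    field_simp
    linarith [this]
end

section
/- Let s > 0 and fix positive weights π_1, …, π_n. Then the detailed balance condition π_i a_{ij} = π_j a_{ji} for all i, j = 1, …, n holds if and only if the matrix H(u) A(u) is symmetric for every u ∈ (0,∞)^n. -/
open Finset Real

noncomputable section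

lemma matHA_entry (n : ℕ) (s : ℝ) (a0 : Fin n → ℝ) (a : Fin n → Fin n → ℝ)
    (P : Fin n → ℝ) (u : Fin n → ℝ) (i j : Fin n) :
    (matH n s P u * matA n s a0 a u) i j =
      s * P i * u i ^ (s - 2) *
        ((if i = j then a0 i + ∑ k, a i k * u k ^ s else 0)
          + s * a i j * u i * u j ^ (s - 1)) := by
  rw [Matrix.mul_apply]
  rw [Finset.sum_eq_single i]
  · simp [matH, matA]
  · intro b _ hb
    simp [matH, matA, hb.symm]
  · simp

theorem stmt15 (n : ℕ) (hn : 1 ≤ n) (s : ℝ) (hs : 0 < s)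
    (a0 : Fin n → ℝ) (a : Fin n → Fin n → ℝ) (P : Fin n → ℝ)
    (ha0 : ∀ i, 0 ≤ a0 i) (ha : ∀ i j, 0 ≤ a i j) (hP : ∀ i, 0 < P i) :
    (∀ i j, P i * a i j = P j * a j i) ↔
      ∀ u : Fin n → ℝ, (∀ i, 0 < u i) →
        (matH n s P u * matA n s a0 a u).IsSymm := by
  constructor
  · intro hdb u hu
    rw [Matrix.IsSymm]
    ext i j
    rw [Matrix.transpose_apply, matHA_entry, matHA_entry]
    by_cases hij : i = j
    · subst hij; ring
    · have hij' : ¬ j = i := fun h => hij h.symm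
      simp only [hij, hij', if_false, zero_add]
      have hpow : ∀ k : Fin n, u k ^ (s - 2) * u k = u k ^ (s - 1) := by
        intro k
        rw [show s - 1 = (s - 2) + 1 by ring, Real.rpow_add (hu k), Real.rpow_one]
      have key : P j * a j i * (u j ^ (s - 2) * u j) * u i ^ (s - 1)
          = P i * a i j * (u i ^ (s - 2) * u i) * u j ^ (s - 1) := by
        rw [hpow, hpow, ← hdb i j]
        ring
      linear_combination (s * s) * key
  · intro hsymm i j
    have h := hsymm (fun _ => 1) (fun _ => one_pos)
    have h2 := congrFun (congrFun h j) i
    rw [Matrix.transpose_apply, matHA_entry, matHA_entry] at h2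
    by_cases hij : i = j
    · subst hij; rfl
    · have hij' : ¬ j = i := fun h => hij h.symm
      simp only [hij, hij', if_false, zero_add, Real.one_rpow, mul_one] at h2
      have hs2 : (0:ℝ) < s * s := mul_pos hs hs
      have h3 : s * s * (P j * a j i) = s * s * (P i * a i j) := by linear_combination -h2
      exact (mul_left_cancel₀ hs2.ne' h3).symm
end
end

section
/- Let n = 3, s = 1, π_1 = π_2 = π_3 = 1, a_{13} = a_{32} = a_{21} = 1 and all other coefficients a_{ij} = 0 and a_{i0} = 0. Let 0 < ε < 1/2 and define u⁰ = (u₁⁰, u₂⁰, u₃⁰) on (0,1) by u₁⁰(x) = 1; u₂⁰(x) = 3 for 0 < x < 1/2, u₂⁰(x) = 3 − ε^{-1}(x − 1/2) for 1/2 < x < 1/2 + ε, u₂⁰(x) = 2 for 1/2 + ε < x < 1; u₃⁰(x) = 9 for 0 < x < 1/2, u₃⁰(x) = 9 + ε^{-1}(x − 1/2) for 1/2 < x < 1/2 + ε, u₃⁰(x) = 10 for 1/2 + ε < x < 1. Then the entropy production ∫₀¹ (∂_x u⁰(x))ᵀ H(u⁰(x)) A(u⁰(x)) (∂_x u⁰(x))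 dx ≤ −1/(6ε), where ∂_x u⁰ denotes the (almost everywhere defined) derivative of the piecewise linear function u⁰. -/
/-!
On the ramp `1/2 < x < 1/2 + ε` the profile is `u = (1, v, 12 - v)` with `v ∈ [2, 3]` and
`∂ₓu = ε⁻¹ (0, -1, 1)`; elsewhere `∂ₓu = 0` off two points. For `s = 1` and the cyclic
coefficients, `H A` has diagonal `(u₃/u₁, u₁/u₂, u₂/u₃)` and ones at the cyclic off-diagonal
positions, so the integrand on the ramp is `ε⁻² (1/v - 1 + v/(12 - v)) ≤ -ε⁻²/6`. Integrating
over an interval of length `ε` gives `-1/(6ε)`.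
-/

open Finset Real

noncomputable section

open MeasureTheory

lemma matH_mul_matA_apply_of_s_one {n : ℕ} (P a0 : Fin n → ℝ) (a : Fin n → Fin n → ℝ)
    {u : Fin n → ℝ} (hu : ∀ i, u i ≠ 0) (i j : Fin n) :
    (matH n 1 P u * matA n 1 a0 a u) i j =
      P i * (if i = j then (a0 i + ∑ k, a i k * u k) / u i else 0) + P i * a i j := by
  have hi := hu i
  simp only [Matrix.mul_apply, matH, matA, Matrix.of_apply, ite_mul, zero_mul,
    Finset.sum_ite_eq, Finset.mem_univ, if_true]
  norm_num [Real.rpow_neg_one]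
  split_ifs <;> field_simp
  ring

lemma quad_matH_mul_matA_cyclic {u : Fin 3 → ℝ} (hu : ∀ i, u i ≠ 0) (z : Fin 3 → ℝ) :
    quad 3 (matH 3 1 (fun _ => 1) u *
        matA 3 1 (fun _ => 0) ![![0, 0, 1], ![1, 0, 0], ![0, 1, 0]] u) z =
      z 0 ^ 2 * u 2 / u 0 + z 1 ^ 2 * u 0 / u 1 + z 2 ^ 2 * u 1 / u 2
        + z 0 * z 2 + z 1 * z 0 + z 2 * z 1 := by
  simp [quad, matH_mul_matA_apply_of_s_one _ _ _ hu, Fin.sum_univ_three]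
  ring

lemma inv_sub_one_add_div_le {v : ℝ} (h2 : 2 ≤ v) (h3 : v ≤ 3) :
    v⁻¹ - 1 + v / (12 - v) ≤ -(1 / 6) := by
  have hv : 0 < v := by linarith
  have hw : 0 < 12 - v := by linarith
  rw [← sub_nonneg]
  have hsplit : -(1 / 6) - (v⁻¹ - 1 + v / (12 - v)) =
      (11 * (v - 2) * (3 - v) + 11 * v - 6) / (6 * v * (12 - v)) := by
    field_simp
    ring
  rw [hsplit]
  apply div_nonneg <;> nlinarith

lemma deriv_ite_lt_ite_lt {a b c d x : ℝ} {g : ℝ → ℝ} (hab : a ≤ b) (hxa : x ≠ a) (hxb : x ≠ b) :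
    deriv (fun y => if y < a then c else if y < b then g y else d) x =
      (Set.Ioo a b).indicator (deriv g) x := by
  rcases hxa.lt_or_gt with hxa | hxa
  · have : (fun y => if y < a then c else if y < b then g y else d) =ᶠ[nhds x] fun _ => c := by
      filter_upwards [Iio_mem_nhds hxa] with y hy using if_pos hy
    rw [this.deriv_eq, deriv_const, Set.indicator_of_notMem (fun h => hxa.not_gt h.1)]
  rcases hxb.lt_or_gt with hxb | hxb
  · have : (fun y => if y < a then c else if y < b then g y else d) =ᶠ[nhds x] g := by
      filter_upwards [Ioo_mem_nhds hxa hxb] with y hy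
      rw [if_neg hy.1.not_gt, if_pos hy.2]
    rw [this.deriv_eq, Set.indicator_of_mem (show x ∈ Set.Ioo a b from ⟨hxa, hxb⟩)]
  · have : (fun y => if y < a then c else if y < b then g y else d) =ᶠ[nhds x] fun _ => d := by
      filter_upwards [Ioi_mem_nhds hxb] with y hy
      rw [if_neg (hab.trans hy.le).not_gt, if_neg hy.le.not_gt]
    rw [this.deriv_eq, deriv_const, Set.indicator_of_notMem (fun h => hxb.not_gt h.2)]

lemma setIntegral_Ioo_le_of_le {f : ℝ → ℝ} {a b C : ℝ} (hab : a ≤ b)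
    (hf : ContinuousOn f (Set.Icc a b)) (hC : ∀ x ∈ Set.Ioo a b, f x ≤ C) :
    ∫ x in Set.Ioo a b, f x ≤ C * (b - a) := by
  calc ∫ x in Set.Ioo a b, f x ≤ ∫ _ in Set.Ioo a b, C :=
        setIntegral_mono_on (hf.integrableOn_Icc.mono_set Set.Ioo_subset_Icc_self)
          (integrableOn_const measure_Ioo_lt_top.ne) measurableSet_Ioo hC
    _ = C * (b - a) := by
        rw [setIntegral_const, measureReal_def, Real.volume_Ioo,
          ENNReal.toReal_ofReal (sub_nonneg.2 hab), smul_eq_mul, mul_comm]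

section Profile

variable {ε : ℝ}

def profile (ε : ℝ) : ℝ → Fin 3 → ℝ := fun x => ![1,
  if x < 1 / 2 then 3
    else if x < 1 / 2 + ε then 3 - ε⁻¹ * (x - 1 / 2) else 2,
  if x < 1 / 2 then 9
    else if x < 1 / 2 + ε then 9 + ε⁻¹ * (x - 1 / 2) else 10]

def ramp (ε x : ℝ) : ℝ := 3 - ε⁻¹ * (x - 1 / 2)

@[fun_prop]
lemma continuous_ramp : Continuous (ramp ε) := by
  unfold ramp
  fun_prop

lemma ramp_mem_Icc (hε : 0 < ε) {x : ℝ} (hx : x ∈ Set.Icc (1 / 2) (1 / 2 + ε)) :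
    ramp ε x ∈ Set.Icc (2 : ℝ) 3 := by
  have h0 : 0 ≤ ε⁻¹ * (x - 1 / 2) := mul_nonneg (inv_nonneg.2 hε.le) (by linarith [hx.1])
  have h1 : ε⁻¹ * (x - 1 / 2) ≤ 1 := by
    rw [inv_mul_le_iff₀ hε]
    linarith [hx.2]
  constructor <;> unfold ramp <;> linarith

lemma profile_of_mem_Ioo {x : ℝ} (hx : x ∈ Set.Ioo (1 / 2) (1 / 2 + ε)) :
    profile ε x = ![1, ramp ε x, 12 - ramp ε x] := by
  simp only [profile, ramp, if_neg hx.1.not_gt, if_pos hx.2]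
  congr 3
  ring

lemma deriv_profile (hε : 0 < ε) {x : ℝ} (h1 : x ≠ 1 / 2) (h2 : x ≠ 1 / 2 + ε) :
    (fun i => deriv (fun y => profile ε y i) x) =
      (Set.Ioo (1 / 2) (1 / 2 + ε)).indicator (fun _ => ![0, -ε⁻¹, ε⁻¹]) x := by
  have hab : (1 / 2 : ℝ) ≤ 1 / 2 + ε := by linarith
  funext i
  fin_cases i <;>
    simp only [Fin.zero_eta, Fin.mk_one, Fin.reduceFinMk, profile, Matrix.cons_val_zero,
      Matrix.cons_val_one, Matrix.cons_val_two, Matrix.tail_cons, Matrix.head_cons, deriv_const,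
      deriv_ite_lt_ite_lt hab h1 h2, Set.indicator_apply] <;>
    split_ifs <;> simp

lemma entropyDensity_profile_ae_eq (hε : 0 < ε) :
    (fun x => quad 3 (matH 3 1 (fun _ => 1) (profile ε x) *
        matA 3 1 (fun _ => 0) ![![0, 0, 1], ![1, 0, 0], ![0, 1, 0]] (profile ε x))
        (fun i => deriv (fun y => profile ε y i) x)) =ᵐ[volume]
      (Set.Ioo (1 / 2) (1 / 2 + ε)).indicator fun x =>
        ε⁻¹ ^ 2 * ((ramp ε x)⁻¹ - 1 + ramp ε x / (12 - ramp ε x)) := by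
  filter_upwards [volume.ae_ne (1 / 2), volume.ae_ne (1 / 2 + ε)] with x h1 h2
  rw [deriv_profile hε h1 h2]
  by_cases hx : x ∈ Set.Ioo (1 / 2 : ℝ) (1 / 2 + ε)
  · have hv := ramp_mem_Icc hε (Set.Ioo_subset_Icc_self hx)
    have hu : ∀ i, ![1, ramp ε x, 12 - ramp ε x] i ≠ 0 := by
      intro i; fin_cases i <;> simp <;> linarith [hv.1, hv.2]
    rw [Set.indicator_of_mem hx, Set.indicator_of_mem hx, profile_of_mem_Ioo hx,
      quad_matH_mul_matA_cyclic hu]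
    simp
    ring
  · rw [Set.indicator_of_notMem hx, Set.indicator_of_notMem hx]
    simp [quad]

lemma setIntegral_entropyDensity_ramp_le (hε : 0 < ε) :
    ∫ x in Set.Ioo (1 / 2) (1 / 2 + ε), ε⁻¹ ^ 2 * ((ramp ε x)⁻¹ - 1 + ramp ε x / (12 - ramp ε x))
      ≤ -(1 / (6 * ε)) := by
  have hv := fun x (hx : x ∈ Set.Icc (1 / 2 : ℝ) (1 / 2 + ε)) => ramp_mem_Icc hε hx
  have hv0 : ∀ x ∈ Set.Icc (1 / 2 : ℝ) (1 / 2 + ε), ramp ε x ≠ 0 := fun x hx => by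
    linarith [(hv x hx).1]
  have hw0 : ∀ x ∈ Set.Icc (1 / 2 : ℝ) (1 / 2 + ε), 12 - ramp ε x ≠ 0 := fun x hx => by
    linarith [(hv x hx).2]
  calc _ ≤ ε⁻¹ ^ 2 * -(1 / 6) * (1 / 2 + ε - 1 / 2) :=
        setIntegral_Ioo_le_of_le (by linarith) (by fun_prop (disch := assumption)) fun x hx =>
          mul_le_mul_of_nonneg_left (inv_sub_one_add_div_le (hv x (Set.Ioo_subset_Icc_self hx)).1
            (hv x (Set.Ioo_subset_Icc_self hx)).2) (sq_nonneg _)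
    _ = -(1 / (6 * ε)) := by field_simp; ring

end Profile

theorem stmt16 (ε : ℝ) (hε : 0 < ε) (hε2 : ε < 1 / 2)
    (a : Fin 3 → Fin 3 → ℝ) (ha : a = ![![0, 0, 1], ![1, 0, 0], ![0, 1, 0]])
    (U : ℝ → Fin 3 → ℝ)
    (hU : U = fun x => ![1,
      if x < 1 / 2 then 3
        else if x < 1 / 2 + ε then 3 - ε⁻¹ * (x - 1 / 2) else 2,
      if x < 1 / 2 then 9
        else if x < 1 / 2 + ε then 9 + ε⁻¹ * (x - 1 / 2) else 10]) :
    ∫ x in Set.Ioo (0 : ℝ) 1,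
        ∑ i, ∑ j, deriv (fun y => U y i) x
          * (matH 3 1 (fun _ => 1) (U x) * matA 3 1 (fun _ => 0) a (U x)) i j
          * deriv (fun y => U y j) x
      ≤ -(1 / (6 * ε)) := by
  obtain rfl : U = profile ε := hU
  subst ha
  change ∫ x in Set.Ioo (0 : ℝ) 1, quad 3 _ (fun i => deriv (fun y => profile ε y i) x) ≤ _
  rw [integral_congr_ae (ae_restrict_of_ae (entropyDensity_profile_ae_eq hε)),
    setIntegral_indicator measurableSet_Ioo,
    Set.inter_eq_right.2 (Set.Ioo_subset_Ioo (by linarith) (by linarith))]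
  exact setIntegral_entropyDensity_ramp_le hε
end
end

section
/- There exists a constant C > 0, depending only on n, the coefficients b_{i0}, b_{ij} and the weights π_i, such that for all u ∈ (0,∞)^n one has Σ_{i=1}^n f_i(u) · π_i log u_i ≤ C ( 1 + h(u) ), where f_i(u) = u_i ( b_{i0} − Σ_{j=1}^n b_{ij} u_j ) and h(u) = Σ_{i=1}^n π_i ( u_i (log u_i − 1) + 1 ). -/
open Finset Real

lemma keyK0 (u : ℝ) (hu : 0 < u) : u * (1 - Real.log u) ≤ 1 := by
  have h := Real.add_one_le_exp (-Real.log u)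
  have he : Real.exp (-Real.log u) = 1 / u := by
    rw [Real.exp_neg, Real.exp_log hu]; ring
  have h2 : 1 - Real.log u ≤ 1 / u := by linarith [he ▸ h]
  calc u * (1 - Real.log u) ≤ u * (1 / u) := by
        exact mul_le_mul_of_nonneg_left h2 hu.le
    _ = 1 := by field_simp

lemma keyK (u : ℝ) (hu : 0 < u) : u * (2 - Real.log u) ≤ 3 := by
  have h := Real.add_one_le_exp (1 - Real.log u)
  have he : Real.exp (1 - Real.log u) = Real.exp 1 / u := by
    rw [Real.exp_sub, Real.exp_log hu]
  have h2 : 2 - Real.log u ≤ Real.exp 1 / u := by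
    rw [← he]; linarith
  have h3 : u * (2 - Real.log u) ≤ u * (Real.exp 1 / u) :=
    mul_le_mul_of_nonneg_left h2 hu.le
  have h4 : u * (Real.exp 1 / u) = Real.exp 1 := by field_simp
  have h5 : Real.exp 1 ≤ 3 := by
    have := Real.exp_one_lt_d9
    linarith
  linarith [h3, h4 ▸ h3]

lemma g_nonneg (u : ℝ) (hu : 0 < u) : 0 ≤ u * (Real.log u - 1) + 1 := by
  nlinarith [keyK0 u hu]

lemma ulogu_le (u : ℝ) (hu : 0 < u) :
    u * Real.log u ≤ 2 * (u * (Real.log u - 1) + 1) + 3 := by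
  nlinarith [keyK u hu]

lemma u_le (u : ℝ) (hu : 0 < u) : u ≤ (u * (Real.log u - 1) + 1) + 2 := by
  nlinarith [keyK u hu]

lemma per_index (u S P b0 : ℝ) (hu : 0 < u) (hS : 0 ≤ S) (hP : 0 < P)
    (hb0 : 0 ≤ b0) :
    (u * (b0 - S)) * (P * Real.log u)
      ≤ P * b0 * (2 * (u * (Real.log u - 1) + 1) + 3) + P * S := by
  rcases le_or_gt 0 (Real.log u) with hl | hl
  · have h1 : 0 ≤ u * Real.log u := mul_nonneg hu.le hl
    have h2 := ulogu_le u hu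
    nlinarith [mul_nonneg (mul_nonneg hP.le hS) h1, mul_nonneg hP.le hb0,
      mul_le_mul_of_nonneg_left h2 (mul_nonneg hP.le hb0)]
  · have h1 : u * Real.log u ≤ 0 := mul_nonpos_of_nonneg_of_nonpos hu.le hl.le
    have h2 : -(u * Real.log u) ≤ 1 := by nlinarith [keyK0 u hu]
    have hA : P * b0 * (u * Real.log u) ≤ 0 :=
      mul_nonpos_of_nonneg_of_nonpos (mul_nonneg hP.le hb0) h1
    have hB : P * S * (-(u * Real.log u)) ≤ P * S * 1 :=
      mul_le_mul_of_nonneg_left h2 (mul_nonneg hP.le hS)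
    have hC : 0 ≤ P * b0 * (2 * (u * (Real.log u - 1) + 1) + 3) := by
      have := g_nonneg u hu
      positivity
    nlinarith [hA, hB, hC]

theorem stmt18 (n : ℕ) (hn : 1 ≤ n)
    (b0 : Fin n → ℝ) (b : Fin n → Fin n → ℝ) (P : Fin n → ℝ)
    (hb0 : ∀ i, 0 ≤ b0 i) (hb : ∀ i j, 0 ≤ b i j) (hP : ∀ i, 0 < P i) :
    ∃ C : ℝ, 0 < C ∧ ∀ u : Fin n → ℝ, (∀ i, 0 < u i) →
      ∑ i, (u i * (b0 i - ∑ j, b i j * u j)) * (P i * Real.log (u i))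
        ≤ C * (1 + ∑ i, P i * (u i * (Real.log (u i) - 1) + 1)) := by
  set B0s : ℝ := ∑ i, b0 i with hB0s
  set K1 : ℝ := ∑ i, ∑ j, P i * b i j / P j with hK1
  set K2 : ℝ := ∑ i, ∑ j, P i * b i j with hK2
  set SP : ℝ := ∑ i, P i with hSP
  have hB0s0 : 0 ≤ B0s := Finset.sum_nonneg fun i _ => hb0 i
  have hK10 : 0 ≤ K1 := Finset.sum_nonneg fun i _ =>
    Finset.sum_nonneg fun j _ => div_nonneg (mul_nonneg (hP i).le (hb i j)) (hP j).le
  have hK20 : 0 ≤ K2 := Finset.sum_nonneg fun i _ =>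
    Finset.sum_nonneg fun j _ => mul_nonneg (hP i).le (hb i j)
  have hSP0 : 0 ≤ SP := Finset.sum_nonneg fun i _ => (hP i).le
  refine ⟨1 + 2 * B0s + K1 + 3 * B0s * SP + 2 * K2, by positivity, fun u hu => ?_⟩
  set g : Fin n → ℝ := fun i => u i * (Real.log (u i) - 1) + 1 with hg
  set H : ℝ := ∑ i, P i * g i with hH
  have hg0 : ∀ i, 0 ≤ g i := fun i => g_nonneg (u i) (hu i)
  have hH0 : 0 ≤ H := Finset.sum_nonneg fun i _ => mul_nonneg (hP i).le (hg0 i)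
  have hgH : ∀ j, g j ≤ H / P j := fun j => by
    rw [le_div_iff₀ (hP j)]
    calc g j * P j = P j * g j := by ring
      _ ≤ H := Finset.single_le_sum (f := fun i => P i * g i)
          (fun i _ => mul_nonneg (hP i).le (hg0 i)) (Finset.mem_univ j)
  have hb0le : ∀ i, b0 i ≤ B0s := fun i =>
    Finset.single_le_sum (fun i _ => hb0 i) (Finset.mem_univ i)
  calc ∑ i, (u i * (b0 i - ∑ j, b i j * u j)) * (P i * Real.log (u i))
      ≤ ∑ i, (P i * b0 i * (2 * g i + 3) + P i * ∑ j, b i j * u j) := by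
        refine Finset.sum_le_sum fun i _ => ?_
        exact per_index (u i) (∑ j, b i j * u j) (P i) (b0 i) (hu i)
          (Finset.sum_nonneg fun j _ => mul_nonneg (hb i j) (hu j).le) (hP i) (hb0 i)
    _ ≤ ∑ i, ((2 * B0s * (P i * g i) + 3 * B0s * P i)
          + ∑ j, (P i * b i j / P j * H + 2 * (P i * b i j))) := by
        refine Finset.sum_le_sum fun i _ => ?_
        have h1 : P i * b0 i * (2 * g i + 3)
            ≤ 2 * B0s * (P i * g i) + 3 * B0s * P i := by
          nlinarith [hb0le i, hg0 i, (hP i).le, hb0 i,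
            mul_nonneg (hP i).le (hg0 i), hB0s0]
        have h2 : P i * ∑ j, b i j * u j
            ≤ ∑ j, (P i * b i j / P j * H + 2 * (P i * b i j)) := by
          rw [Finset.mul_sum]
          refine Finset.sum_le_sum fun j _ => ?_
          have hule : u j ≤ g j + 2 := u_le (u j) (hu j)
          have : u j ≤ H / P j + 2 := le_trans hule (by linarith [hgH j])
          have h3 : P i * (b i j * u j) ≤ P i * b i j * (H / P j + 2) := by
            have := mul_le_mul_of_nonneg_left this (mul_nonneg (hP i).le (hb i j))
            nlinarith [this]
          calc P i * (b i j * u j) ≤ P i * b i j * (H / P j + 2) := h3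
            _ = P i * b i j / P j * H + 2 * (P i * b i j) := by
                field_simp
        exact add_le_add h1 h2
    _ = 2 * B0s * H + 3 * B0s * SP + (K1 * H + 2 * K2) := by
        simp only [Finset.sum_add_distrib, ← Finset.mul_sum, ← Finset.sum_mul]
        rw [← hH, ← hSP, ← hK1]
        have hk : ∑ i, P i * ∑ j, b i j = K2 := by
          rw [hK2]; exact Finset.sum_congr rfl fun i _ => Finset.mul_sum _ _ _
        rw [hk]
    _ ≤ (1 + 2 * B0s + K1 + 3 * B0s * SP + 2 * K2) * (1 + H) := by
        nlinarith [mul_nonneg hB0s0 hSP0, mul_nonneg hK10 hH0,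
          mul_nonneg hB0s0 hH0, mul_nonneg (mul_nonneg hB0s0 hSP0) hH0,
          mul_nonneg hK20 hH0]
end
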